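/- arXiv:1809.03816 — 7 statements merged into one kernel-verified Lean document; each statement's English description precedes it below -/
import Mathlib

section
/- Fix Δx, Δy > 0. Let D_x^±(η) = Σ_{j=0}^{3} a_j^± φ_j(η) and D_y^±(ξ) = Σ_{j=0}^{3} b_j^± φ_j(ξ) be degree-3 face polynomials satisfying the compatibility condition (a₀⁺ − a₀⁻)Δy + (b₀⁺ − b₀⁻)Δx = 0, and let ω₁ ∈ ℝ. Then there exists exactly one vector field D = (Dx, Dy) on [−1/2,1/2]² with Dx in the span of { φ_i(ξ)φ_j(η) : i+j ≤ 4, j ≤ 3 } with zero coefficients on φ₃(ξ)φ₁(η) and φ₂(ξ)φ₂(η), and Dy in the span of { φ_i(ξ)φ_j(η) : i+j ≤ 4, i ≤ 3 } with zero coefficients on φ₂(ξ)φ₂(η) and φ₁(ξ)φ₃(η), such that: (i) Dx(±1/2, η) = D_x^±(η) for all η and Dy(ξ, ±1/2) = D_y^±(ξ) for all ξ; (ii) (1/Δx)∂_ξ Dx + (1/Δy)∂_η Dy ≡ 0 on [−1/2,1/2]²; and (iii) 12 ∬_{[−1/2,1/2]²} [ Dy·ξ − Dx·η ] dξ dη =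 ω₁. -/
/-- The orthogonal basis polynomials on `[-1/2, 1/2]`. -/
noncomputable def phi : ℕ → ℝ → ℝ
  | 0, _ => 1
  | 1, x => x
  | 2, x => x ^ 2 - 1 / 12
  | 3, x => x ^ 3 - 3 / 20 * x
  | 4, x => x ^ 4 - 3 / 14 * x ^ 2 + 3 / 560
  | 5, x => x ^ 5 - 5 / 18 * x ^ 3 + 5 / 336 * x
  | _, _ => 0

/-!
Expand both components in the tensor basis `φᵢ(ξ) φⱼ(η)`. Since `φ₀, …, φ₃` are linearly
independent on `[-1/2, 1/2]` and each `φₙ'` is a combination of lower `φₖ`, the face conditions and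
the vanishing of the divergence (a combination of `φᵢ(ξ) φⱼ(η)` with `i, j ≤ 3`) are linear
equations on the 24 coefficients `c` of `Dx` and `d` of `Dy`, and orthogonality of the `φₙ` turns
the moment condition into `d₀₁ - c₀₁ = ω₁`. The system is triangular: means and jumps of the face
data give most coefficients, the divergence equations give the top normal modes of `Dx` from the
jumps of the data of `Dy`, and the moment fixes the one coupled pair, the `(2, 1)` modes, as
`Δx + Δy ≠ 0`. The `(0, 0)` divergence equation is the compatibility condition. The problem is
symmetric under `ξ ↔ η`, which exchanges `(Δx, a, ω₁)` with `(Δy, b, -ω₁)`.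
-/

open Finset

@[fun_prop]
theorem continuous_phi (n : ℕ) : Continuous (phi n) := by
  match n with
  | 0 | 1 | 2 | 3 | 4 | 5 => unfold phi; fun_prop
  | n + 6 => exact continuous_const

noncomputable def phiDeriv : ℕ → ℝ → ℝ
  | 1, _ => 1
  | 2, x => 2 * phi 1 x
  | 3, x => 3 * phi 2 x + phi 0 x / 10
  | 4, x => 4 * phi 3 x + 6 / 35 * phi 1 x
  | 5, x => 5 * phi 4 x + 5 / 21 * phi 2 x + phi 0 x / 126
  | _, _ => 0

theorem hasDerivAt_phi (n : ℕ) (x : ℝ) : HasDerivAt (phi n) (phiDeriv n x) x := by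
  match n with
  | 0 => exact hasDerivAt_const x 1
  | 1 => exact hasDerivAt_id x
  | 2 =>
    exact ((hasDerivAt_pow 2 x).sub_const (1 / 12)).congr_deriv
      (by simp only [phiDeriv, phi]; push_cast; ring)
  | 3 =>
    exact ((hasDerivAt_pow 3 x).sub ((hasDerivAt_id x).const_mul (3 / 20))).congr_deriv
      (by simp only [phiDeriv, phi]; push_cast; ring)
  | 4 =>
    exact (((hasDerivAt_pow 4 x).sub ((hasDerivAt_pow 2 x).const_mul (3 / 14))).add_const
      (3 / 560)).congr_deriv (by simp only [phiDeriv, phi]; push_cast; ring)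
  | 5 =>
    exact (((hasDerivAt_pow 5 x).sub ((hasDerivAt_pow 3 x).const_mul (5 / 18))).add
      ((hasDerivAt_id x).const_mul (5 / 336))).congr_deriv
      (by simp only [phiDeriv, phi]; push_cast; ring)
  | n + 6 => exact hasDerivAt_const x 0

theorem eq_zero_of_sum_phi_eq_zero (a : ℕ → ℝ)
    (h : ∀ x ∈ Set.Icc (-(1:ℝ)/2) (1/2), ∑ i ∈ range 4, a i * phi i x = 0) :
    ∀ i < 4, a i = 0 := by
  have h₁ := h (1/2) (by norm_num)
  have h₂ := h (-(1/2)) (by norm_num)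
  have h₃ := h (1/4) (by norm_num)
  have h₄ := h (-(1/4)) (by norm_num)
  simp only [sum_range_succ, sum_range_zero, phi] at h₁ h₂ h₃ h₄
  intro i hi
  interval_cases i <;> linarith

theorem sum_phi_eq_sum_phi_iff (a b : ℕ → ℝ) :
    (∀ x ∈ Set.Icc (-(1:ℝ)/2) (1/2),
      ∑ i ∈ range 4, a i * phi i x = ∑ i ∈ range 4, b i * phi i x) ↔ ∀ i < 4, a i = b i := by
  refine ⟨fun h i hi => sub_eq_zero.mp (eq_zero_of_sum_phi_eq_zero (a - b) (fun x hx => ?_) i hi),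
    fun h x _ => sum_congr rfl fun i hi => by rw [h i (mem_range.mp hi)]⟩
  simp [sub_mul, h x hx]

theorem eq_zero_of_sum_phi_mul_phi_eq_zero (g : ℕ × ℕ → ℝ)
    (h : ∀ x ∈ Set.Icc (-(1:ℝ)/2) (1/2), ∀ y ∈ Set.Icc (-(1:ℝ)/2) (1/2),
      ∑ i ∈ range 4, ∑ j ∈ range 4, g (i, j) * (phi i x * phi j y) = 0) :
    ∀ i < 4, ∀ j < 4, g (i, j) = 0 := by
  intro i hi j hj
  refine eq_zero_of_sum_phi_eq_zero (fun i => g (i, j)) (fun x hx => ?_) i hi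
  refine eq_zero_of_sum_phi_eq_zero (fun j => ∑ i ∈ range 4, g (i, j) * phi i x)
    (fun y hy => ?_) j hj
  rw [← h x hx y hy, sum_comm]
  simp only [sum_mul, mul_assoc]

theorem integral_phi (n : ℕ) :
    ∫ x in (-(1:ℝ)/2)..(1/2), phi n x = if n = 0 then 1 else 0 := by
  match n with
  | 0 | 1 | 2 | 3 | 4 | 5 =>
    norm_num [phi, intervalIntegral.integral_sub, intervalIntegral.integral_add,
      intervalIntegral.integral_const_mul, intervalIntegral.integral_const_mul _ (fun x : ℝ => x),
      intervalIntegral.intervalIntegrable_id.const_mul,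
      (intervalIntegral.intervalIntegrable_pow _).const_mul]
  | n + 6 => simp [phi]

theorem integral_phi_mul_id (n : ℕ) :
    ∫ x in (-(1:ℝ)/2)..(1/2), phi n x * x = if n = 1 then 1 / 12 else 0 := by
  match n with
  | 0 | 1 | 2 | 3 | 4 | 5 =>
    norm_num [phi, sub_mul, add_mul, ← pow_succ, ← pow_two, mul_assoc,
      intervalIntegral.integral_sub, intervalIntegral.integral_add,
      intervalIntegral.integral_const_mul, intervalIntegral.integral_const_mul _ (fun x : ℝ => x),
      intervalIntegral.intervalIntegrable_id.const_mul,
      (intervalIntegral.intervalIntegrable_pow _).const_mul]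
  | n + 6 => simp [phi]

theorem integral_integral_sum_mul {ι : Type*} (s : Finset ι) (f g : ι → ℝ → ℝ)
    (hf : ∀ i, Continuous (f i)) (hg : ∀ i, Continuous (g i)) (a b a' b' : ℝ) :
    ∫ x in a..b, ∫ y in a'..b', ∑ i ∈ s, f i x * g i y =
      ∑ i ∈ s, (∫ x in a..b, f i x) * ∫ y in a'..b', g i y := by
  have inner (x : ℝ) :
      ∫ y in a'..b', ∑ i ∈ s, f i x * g i y = ∑ i ∈ s, f i x * ∫ y in a'..b', g i y := by
    rw [intervalIntegral.integral_finsetSum fun i _ => ((hg i).const_mul _).intervalIntegrable _ _]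
    simp only [intervalIntegral.integral_const_mul]
  simp_rw [inner]
  rw [intervalIntegral.integral_finsetSum fun i _ => ((hf i).mul_const _).intervalIntegrable _ _]
  simp only [intervalIntegral.integral_mul_const]

theorem integral_integral_sub {F G : ℝ × ℝ → ℝ} (hF : Continuous F) (hG : Continuous G)
    (a b a' b' : ℝ) :
    ∫ x in a..b, ∫ y in a'..b', (F (x, y) - G (x, y)) =
      (∫ x in a..b, ∫ y in a'..b', F (x, y)) - ∫ x in a..b, ∫ y in a'..b', G (x, y) := by
  have inner (x : ℝ) : ∫ y in a'..b', (F (x, y) - G (x, y)) =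
      (∫ y in a'..b', F (x, y)) - ∫ y in a'..b', G (x, y) :=
    intervalIntegral.integral_sub
      ((by fun_prop : Continuous fun y => F (x, y)).intervalIntegrable _ _)
      ((by fun_prop : Continuous fun y => G (x, y)).intervalIntegrable _ _)
  have hF' := intervalIntegral.continuous_parametric_intervalIntegral_of_continuous'
    (f := fun x y => F (x, y)) (μ := MeasureTheory.volume) hF a' b'
  have hG' := intervalIntegral.continuous_parametric_intervalIntegral_of_continuous'
    (f := fun x y => G (x, y)) (μ := MeasureTheory.volume) hG a' b'
  simp_rw [inner]
  exact intervalIntegral.integral_sub (hF'.intervalIntegrable _ _) (hG'.intervalIntegrable _ _)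

/-- `c (i, j)` multiplies `φᵢ` in the normal and `φⱼ` in the tangential direction:
`φᵢ(ξ) φⱼ(η)` in `bdfmX c`, `φⱼ(ξ) φᵢ(η)` in `bdfmY c`. -/
def bdfmIndex : Finset (ℕ × ℕ) :=
  {(0, 0), (1, 0), (2, 0), (3, 0), (4, 0), (0, 1), (1, 1), (2, 1), (0, 2), (1, 2), (0, 3), (1, 3)}

theorem mem_bdfmIndex {i j : ℕ} :
    (i, j) ∈ bdfmIndex ↔ i + j ≤ 4 ∧ j ≤ 3 ∧ ¬(i = 3 ∧ j = 1) ∧ ¬(i = 2 ∧ j = 2) := by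
  constructor
  · simp only [bdfmIndex, mem_insert, mem_singleton, Prod.mk.injEq]
    omega
  · rintro ⟨h₁, h₂, h₃, h₄⟩
    have : i ≤ 4 := by omega
    interval_cases i <;> interval_cases j <;> simp_all [bdfmIndex]

theorem sum_bdfmIndex {M : Type*} [AddCommMonoid M] (f : ℕ × ℕ → M) :
    ∑ k ∈ bdfmIndex, f k = f (0, 0) + f (1, 0) + f (2, 0) + f (3, 0) + f (4, 0) + f (0, 1) +
      f (1, 1) + f (2, 1) + f (0, 2) + f (1, 2) + f (0, 3) + f (1, 3) := by
  simp [bdfmIndex, add_assoc]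

noncomputable def phiTensor (k : ℕ × ℕ) (p : ℝ × ℝ) : ℝ := phi k.1 p.1 * phi k.2 p.2

noncomputable def bdfmX (c : ℕ × ℕ → ℝ) : ℝ × ℝ → ℝ := ∑ k ∈ bdfmIndex, c k • phiTensor k

noncomputable def bdfmY (d : ℕ × ℕ → ℝ) : ℝ × ℝ → ℝ := ∑ k ∈ bdfmIndex, d k • phiTensor k.swap

theorem bdfmX_basis_eq_image :
    {f : ℝ × ℝ → ℝ | ∃ i j : ℕ, i + j ≤ 4 ∧ j ≤ 3 ∧ ¬(i = 3 ∧ j = 1) ∧ ¬(i = 2 ∧ j = 2) ∧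
      f = fun p => phi i p.1 * phi j p.2} = phiTensor '' bdfmIndex := by
  ext f
  constructor
  · rintro ⟨i, j, h₁, h₂, h₃, h₄, rfl⟩
    exact ⟨(i, j), mem_bdfmIndex.mpr ⟨h₁, h₂, h₃, h₄⟩, rfl⟩
  · rintro ⟨⟨i, j⟩, hk, rfl⟩
    obtain ⟨h₁, h₂, h₃, h₄⟩ := mem_bdfmIndex.mp hk
    exact ⟨i, j, h₁, h₂, h₃, h₄, rfl⟩

theorem bdfmY_basis_eq_image :
    {f : ℝ × ℝ → ℝ | ∃ i j : ℕ, i + j ≤ 4 ∧ i ≤ 3 ∧ ¬(i = 2 ∧ j = 2) ∧ ¬(i = 1 ∧ j = 3) ∧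
      f = fun p => phi i p.1 * phi j p.2} =
      (fun k : ℕ × ℕ => phiTensor k.swap) '' bdfmIndex := by
  ext f
  constructor
  · rintro ⟨i, j, h₁, h₂, h₃, h₄, rfl⟩
    exact ⟨(j, i), mem_bdfmIndex.mpr ⟨by omega, h₂, by omega, by omega⟩, rfl⟩
  · rintro ⟨⟨j, i⟩, hk, rfl⟩
    obtain ⟨h₁, h₂, h₃, h₄⟩ := mem_bdfmIndex.mp hk
    exact ⟨i, j, by omega, h₂, by omega, by omega, rfl⟩

theorem mem_span_bdfmX_iff {f : ℝ × ℝ → ℝ} :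
    f ∈ Submodule.span ℝ (phiTensor '' bdfmIndex) ↔ ∃ c, bdfmX c = f :=
  Submodule.mem_span_image_finset_iff_exists_fun' ℝ

theorem mem_span_bdfmY_iff {f : ℝ × ℝ → ℝ} :
    f ∈ Submodule.span ℝ ((fun k : ℕ × ℕ => phiTensor k.swap) '' bdfmIndex) ↔
      ∃ d, bdfmY d = f :=
  Submodule.mem_span_image_finset_iff_exists_fun' ℝ

theorem bdfmX_apply (c : ℕ × ℕ → ℝ) (p : ℝ × ℝ) :
    bdfmX c p = ∑ k ∈ bdfmIndex, c k * (phi k.1 p.1 * phi k.2 p.2) := by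
  simp [bdfmX, phiTensor]

theorem bdfmY_apply (d : ℕ × ℕ → ℝ) (x y : ℝ) : bdfmY d (x, y) = bdfmX d (y, x) := by
  simp [bdfmY, bdfmX, phiTensor, mul_comm]

theorem bdfmX_congr {c c' : ℕ × ℕ → ℝ} (h : ∀ k ∈ bdfmIndex, c k = c' k) :
    bdfmX c = bdfmX c' :=
  sum_congr rfl fun k hk => by rw [h k hk]

theorem bdfmY_congr {d d' : ℕ × ℕ → ℝ} (h : ∀ k ∈ bdfmIndex, d k = d' k) :
    bdfmY d = bdfmY d' :=
  sum_congr rfl fun k hk => by rw [h k hk]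

@[fun_prop]
theorem continuous_bdfmX (c : ℕ × ℕ → ℝ) : Continuous (bdfmX c) := by
  rw [funext (bdfmX_apply c)]; fun_prop

@[fun_prop]
theorem continuous_bdfmY (d : ℕ × ℕ → ℝ) : Continuous (bdfmY d) := by
  have : bdfmY d = bdfmX d ∘ Prod.swap := funext fun p => bdfmY_apply d p.1 p.2
  rw [this]; fun_prop

noncomputable def bdfmTrace (c : ℕ × ℕ → ℝ) (x : ℝ) : ℕ → ℝ
  | 0 => c (0, 0) + c (1, 0) * phi 1 x + c (2, 0) * phi 2 x + c (3, 0) * phi 3 x +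
      c (4, 0) * phi 4 x
  | 1 => c (0, 1) + c (1, 1) * phi 1 x + c (2, 1) * phi 2 x
  | 2 => c (0, 2) + c (1, 2) * phi 1 x
  | 3 => c (0, 3) + c (1, 3) * phi 1 x
  | _ => 0

theorem bdfmX_apply_eq_sum_trace (c : ℕ × ℕ → ℝ) (x y : ℝ) :
    bdfmX c (x, y) = ∑ j ∈ range 4, bdfmTrace c x j * phi j y := by
  simp only [bdfmX_apply, sum_bdfmIndex, bdfmTrace, sum_range_succ, sum_range_zero, phi]
  ring

theorem bdfmX_trace_iff (c : ℕ × ℕ → ℝ) (x : ℝ) (a : ℕ → ℝ) :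
    (∀ y ∈ Set.Icc (-(1:ℝ)/2) (1/2), bdfmX c (x, y) = ∑ j ∈ range 4, a j * phi j y) ↔
      ∀ j < 4, bdfmTrace c x j = a j := by
  simp only [bdfmX_apply_eq_sum_trace]
  exact sum_phi_eq_sum_phi_iff _ _

noncomputable def normalDerivCoeff (c : ℕ × ℕ → ℝ) : ℕ × ℕ → ℝ
  | (0, 0) => c (1, 0) + c (3, 0) / 10
  | (1, 0) => 2 * c (2, 0) + 6 / 35 * c (4, 0)
  | (2, 0) => 3 * c (3, 0)
  | (3, 0) => 4 * c (4, 0)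
  | (0, 1) => c (1, 1)
  | (1, 1) => 2 * c (2, 1)
  | (0, 2) => c (1, 2)
  | (0, 3) => c (1, 3)
  | _ => 0

theorem hasDerivAt_bdfmX_fst (c : ℕ × ℕ → ℝ) (x y : ℝ) :
    HasDerivAt (fun s => bdfmX c (s, y))
      (∑ i ∈ range 4, ∑ j ∈ range 4, normalDerivCoeff c (i, j) * (phi i x * phi j y)) x := by
  simp only [bdfmX_apply]
  refine (HasDerivAt.fun_sum fun k _ =>
    ((hasDerivAt_phi k.1 x).mul_const _).const_mul (c k)).congr_deriv ?_
  simp only [sum_bdfmIndex, normalDerivCoeff, phiDeriv, sum_range_succ, sum_range_zero, phi]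
  ring

theorem bdfm_divergence_eq (c d : ℕ × ℕ → ℝ) (Δx Δy x y : ℝ) :
    (1 / Δx) * deriv (fun s => bdfmX c (s, y)) x + (1 / Δy) * deriv (fun t => bdfmY d (x, t)) y =
      ∑ i ∈ range 4, ∑ j ∈ range 4,
        (normalDerivCoeff c (i, j) / Δx + normalDerivCoeff d (j, i) / Δy) *
          (phi i x * phi j y) := by
  simp only [bdfmY_apply, (hasDerivAt_bdfmX_fst _ _ _).deriv]
  rw [sum_comm (s := range 4) (t := range 4) (f := fun i j => normalDerivCoeff d (i, j) * _)]
  simp only [mul_sum, ← sum_add_distrib]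
  refine sum_congr rfl fun i _ => sum_congr rfl fun j _ => by ring

theorem bdfm_divFree_iff (c d : ℕ × ℕ → ℝ) (Δx Δy : ℝ) :
    (∀ p ∈ Set.Icc (-(1:ℝ)/2) (1/2) ×ˢ Set.Icc (-(1:ℝ)/2) (1/2),
      (1 / Δx) * deriv (fun ξ => bdfmX c (ξ, p.2)) p.1
        + (1 / Δy) * deriv (fun η => bdfmY d (p.1, η)) p.2 = 0) ↔
      ∀ i < 4, ∀ j < 4, normalDerivCoeff c (i, j) / Δx + normalDerivCoeff d (j, i) / Δy = 0 := by
  simp only [Prod.forall, Set.mem_prod, and_imp, bdfm_divergence_eq]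
  refine ⟨fun h => eq_zero_of_sum_phi_mul_phi_eq_zero
    (fun k => normalDerivCoeff c k / Δx + normalDerivCoeff d k.swap / Δy)
    fun x hx y hy => h x y hx hy, fun h x y _ _ => ?_⟩
  refine sum_eq_zero fun i hi => sum_eq_zero fun j hj => ?_
  rw [h i (mem_range.mp hi) j (mem_range.mp hj), zero_mul]

theorem integral_integral_bdfmX_mul_snd (c : ℕ × ℕ → ℝ) :
    ∫ x in (-(1:ℝ)/2)..(1/2), ∫ y in (-(1:ℝ)/2)..(1/2), bdfmX c (x, y) * y = c (0, 1) / 12 := by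
  have h (x y : ℝ) :
      bdfmX c (x, y) * y = ∑ k ∈ bdfmIndex, (c k * phi k.1 x) * (phi k.2 y * y) := by
    simp only [bdfmX_apply, sum_mul]; exact sum_congr rfl fun _ _ => by ring
  simp only [h]
  rw [integral_integral_sum_mul _ _ _ (fun k => by fun_prop) (fun k => by fun_prop)]
  simp only [intervalIntegral.integral_const_mul, integral_phi, integral_phi_mul_id]
  simp [sum_bdfmIndex, div_eq_mul_inv]

theorem integral_integral_bdfmY_mul_fst (d : ℕ × ℕ → ℝ) :
    ∫ x in (-(1:ℝ)/2)..(1/2), ∫ y in (-(1:ℝ)/2)..(1/2), bdfmY d (x, y) * x = d (0, 1) / 12 := by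
  have h (x y : ℝ) :
      bdfmY d (x, y) * x = ∑ k ∈ bdfmIndex, (d k * (phi k.2 x * x)) * phi k.1 y := by
    simp only [bdfmY_apply, bdfmX_apply, sum_mul]; exact sum_congr rfl fun _ _ => by ring
  simp only [h]
  rw [integral_integral_sum_mul _ _ _ (fun k => by fun_prop) (fun k => by fun_prop)]
  simp only [intervalIntegral.integral_const_mul, integral_phi, integral_phi_mul_id]
  simp [sum_bdfmIndex, div_eq_mul_inv]

theorem bdfm_moment_eq (c d : ℕ × ℕ → ℝ) :
    12 * ∫ x in (-(1:ℝ)/2)..(1/2), ∫ y in (-(1:ℝ)/2)..(1/2),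
      (bdfmY d (x, y) * x - bdfmX c (x, y) * y) = d (0, 1) - c (0, 1) := by
  rw [integral_integral_sub (F := fun p => bdfmY d p * p.1) (G := fun p => bdfmX c p * p.2)
    (by fun_prop) (by fun_prop), integral_integral_bdfmY_mul_fst, integral_integral_bdfmX_mul_snd]
  ring

theorem bdfmTrace_half_iff (c : ℕ × ℕ → ℝ) (a a' : ℕ → ℝ) :
    (∀ j < 4, bdfmTrace c (1/2) j = a j) ∧ (∀ j < 4, bdfmTrace c (-(1/2)) j = a' j) ↔
      c (1, 1) = a 1 - a' 1 ∧ c (1, 2) = a 2 - a' 2 ∧ c (1, 3) = a 3 - a' 3 ∧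
      c (0, 2) = (a 2 + a' 2) / 2 ∧ c (0, 3) = (a 3 + a' 3) / 2 ∧
      c (0, 1) + c (2, 1) / 6 = (a 1 + a' 1) / 2 ∧ c (1, 0) + c (3, 0) / 10 = a 0 - a' 0 ∧
      c (0, 0) + c (2, 0) / 6 + c (4, 0) / 70 = (a 0 + a' 0) / 2 := by
  simp only [Nat.forall_lt_succ_left, Nat.not_lt_zero, IsEmpty.forall_iff, implies_true, and_true,
    bdfmTrace, phi]
  constructor
  · rintro ⟨⟨h₀, h₁, h₂, h₃⟩, h₀', h₁', h₂', h₃'⟩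
    refine ⟨?_, ?_, ?_, ?_, ?_, ?_, ?_, ?_⟩ <;> linarith
  · rintro ⟨h₁₁, h₁₂, h₁₃, h₀₂, h₀₃, h₀₁, h₁₀, h₀₀⟩
    refine ⟨⟨?_, ?_, ?_, ?_⟩, ?_, ?_, ?_, ?_⟩ <;> linarith

noncomputable def solX (Δx Δy : ℝ) (ap am bp bm : ℕ → ℝ) (ω₁ : ℝ) : ℕ × ℕ → ℝ
  | (0, 0) => (ap 0 + am 0) / 2 + Δx / Δy * (bp 1 - bm 1) / 12
  | (1, 0) => ap 0 - am 0 + Δx / Δy * (bp 2 - bm 2) / 30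
  | (2, 0) => Δx / Δy * (3 * (bp 3 - bm 3) / 140 - (bp 1 - bm 1) / 2)
  | (3, 0) => -(Δx / Δy * (bp 2 - bm 2) / 3)
  | (4, 0) => -(Δx / Δy * (bp 3 - bm 3) / 4)
  | (0, 1) =>
    (ap 1 + am 1) / 2 - Δx / (Δx + Δy) * (ω₁ + (ap 1 + am 1) / 2 - (bp 1 + bm 1) / 2)
  | (1, 1) => ap 1 - am 1
  | (2, 1) => 6 * Δx / (Δx + Δy) * (ω₁ + (ap 1 + am 1) / 2 - (bp 1 + bm 1) / 2)
  | (0, 2) => (ap 2 + am 2) / 2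
  | (1, 2) => ap 2 - am 2
  | (0, 3) => (ap 3 + am 3) / 2
  | (1, 3) => ap 3 - am 3
  | _ => 0

theorem bdfmTrace_solX (Δx Δy : ℝ) (ap am bp bm : ℕ → ℝ) (ω₁ : ℝ) :
    (∀ j < 4, bdfmTrace (solX Δx Δy ap am bp bm ω₁) (1/2) j = ap j) ∧
      (∀ j < 4, bdfmTrace (solX Δx Δy ap am bp bm ω₁) (-(1/2)) j = am j) := by
  rw [bdfmTrace_half_iff]
  refine ⟨?_, ?_, ?_, ?_, ?_, ?_, ?_, ?_⟩ <;> simp only [solX] <;> ring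

def IsDivFreeReconstruction (Δx Δy : ℝ) (ap am bp bm : ℕ → ℝ) (ω₁ : ℝ) (Dx Dy : ℝ × ℝ → ℝ) :
    Prop :=
  (∀ η ∈ Set.Icc (-(1:ℝ)/2) (1/2), Dx (1/2, η) = ∑ j ∈ Finset.range 4, ap j * phi j η) ∧
  (∀ η ∈ Set.Icc (-(1:ℝ)/2) (1/2), Dx (-(1/2), η) = ∑ j ∈ Finset.range 4, am j * phi j η) ∧
  (∀ ξ ∈ Set.Icc (-(1:ℝ)/2) (1/2), Dy (ξ, 1/2) = ∑ j ∈ Finset.range 4, bp j * phi j ξ) ∧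
  (∀ ξ ∈ Set.Icc (-(1:ℝ)/2) (1/2), Dy (ξ, -(1/2)) = ∑ j ∈ Finset.range 4, bm j * phi j ξ) ∧
  (∀ p ∈ (Set.Icc (-(1:ℝ)/2) (1/2)) ×ˢ (Set.Icc (-(1:ℝ)/2) (1/2)),
    (1 / Δx) * deriv (fun ξ => Dx (ξ, p.2)) p.1
      + (1 / Δy) * deriv (fun η => Dy (p.1, η)) p.2 = 0) ∧
  (12 * ∫ ξ in (-(1:ℝ)/2)..(1/2), ∫ η in (-(1:ℝ)/2)..(1/2),
    (Dy (ξ, η) * ξ - Dx (ξ, η) * η)) = ω₁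

def IsDivFreeReconstructionCoeffs (Δx Δy : ℝ) (ap am bp bm : ℕ → ℝ) (ω₁ : ℝ)
    (c d : ℕ × ℕ → ℝ) : Prop :=
  (∀ j < 4, bdfmTrace c (1/2) j = ap j) ∧ (∀ j < 4, bdfmTrace c (-(1/2)) j = am j) ∧
  (∀ j < 4, bdfmTrace d (1/2) j = bp j) ∧ (∀ j < 4, bdfmTrace d (-(1/2)) j = bm j) ∧
  (∀ i < 4, ∀ j < 4, normalDerivCoeff c (i, j) / Δx + normalDerivCoeff d (j, i) / Δy = 0) ∧
  d (0, 1) - c (0, 1) = ω₁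

theorem isDivFreeReconstruction_bdfm_iff (Δx Δy : ℝ) (ap am bp bm : ℕ → ℝ) (ω₁ : ℝ)
    (c d : ℕ × ℕ → ℝ) :
    IsDivFreeReconstruction Δx Δy ap am bp bm ω₁ (bdfmX c) (bdfmY d) ↔
      IsDivFreeReconstructionCoeffs Δx Δy ap am bp bm ω₁ c d := by
  refine and_congr (bdfmX_trace_iff c _ ap) <| and_congr (bdfmX_trace_iff c _ am) <|
    and_congr ?_ <| and_congr ?_ <| and_congr (bdfm_divFree_iff c d Δx Δy) ?_
  · simp only [bdfmY_apply]; exact bdfmX_trace_iff d _ bp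
  · simp only [bdfmY_apply]; exact bdfmX_trace_iff d _ bm
  · rw [bdfm_moment_eq]

namespace IsDivFreeReconstructionCoeffs

variable {Δx Δy : ℝ} {ap am bp bm : ℕ → ℝ} {ω₁ : ℝ} {c d : ℕ × ℕ → ℝ}

theorem symm (h : IsDivFreeReconstructionCoeffs Δx Δy ap am bp bm ω₁ c d) :
    IsDivFreeReconstructionCoeffs Δy Δx bp bm ap am (-ω₁) d c := by
  obtain ⟨hcp, hcm, hdp, hdm, hdiv, hmom⟩ := h
  exact ⟨hdp, hdm, hcp, hcm, fun i hi j hj => by rw [add_comm]; exact hdiv j hj i hi, by linarith⟩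

theorem eq_solX (h : IsDivFreeReconstructionCoeffs Δx Δy ap am bp bm ω₁ c d)
    (hx : Δx ≠ 0) (hy : Δy ≠ 0) (hxy : Δx + Δy ≠ 0) :
    ∀ k ∈ bdfmIndex, c k = solX Δx Δy ap am bp bm ω₁ k := by
  obtain ⟨hcp, hcm, hdp, hdm, hdiv, hmom⟩ := h
  obtain ⟨c₁₁, c₁₂, c₁₃, c₀₂, c₀₃, c₀₁, c₁₀, c₀₀⟩ :=
    (bdfmTrace_half_iff c ap am).mp ⟨hcp, hcm⟩
  obtain ⟨d₁₁, d₁₂, d₁₃, -, -, d₀₁, -, -⟩ := (bdfmTrace_half_iff d bp bm).mp ⟨hdp, hdm⟩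
  have div₁₀ := hdiv 1 (by norm_num) 0 (by norm_num)
  have div₂₀ := hdiv 2 (by norm_num) 0 (by norm_num)
  have div₃₀ := hdiv 3 (by norm_num) 0 (by norm_num)
  have div₁₁ := hdiv 1 (by norm_num) 1 (by norm_num)
  simp only [normalDerivCoeff] at div₁₀ div₂₀ div₃₀ div₁₁
  have c₄₀ : c (4, 0) = -(Δx / Δy * (bp 3 - bm 3) / 4) := by
    linear_combination (norm := (field_simp; ring)) Δx / 4 * div₃₀ - Δx / (4 * Δy) * d₁₃
  have c₃₀ : c (3, 0) = -(Δx / Δy * (bp 2 - bm 2) / 3) := by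
    linear_combination (norm := (field_simp; ring)) Δx / 3 * div₂₀ - Δx / (3 * Δy) * d₁₂
  have c₂₀ : c (2, 0) = Δx / Δy * (3 * (bp 3 - bm 3) / 140 - (bp 1 - bm 1) / 2) := by
    linear_combination (norm := (field_simp; ring))
      Δx / 2 * div₁₀ - 3 / 35 * c₄₀ - Δx / (2 * Δy) * d₁₁
  have c₂₁ : c (2, 1) = 6 * Δx / (Δx + Δy) * (ω₁ + (ap 1 + am 1) / 2 - (bp 1 + bm 1) / 2) := by
    linear_combination (norm := (field_simp; ring))
      Δx * Δy / (2 * (Δx + Δy)) * div₁₁ + 6 * Δx / (Δx + Δy) * (c₀₁ + hmom - d₀₁)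
  intro k hk
  simp only [bdfmIndex, mem_insert, mem_singleton] at hk
  rcases hk with rfl | rfl | rfl | rfl | rfl | rfl | rfl | rfl | rfl | rfl | rfl | rfl <;>
    simp only [solX]
  · linear_combination c₀₀ - c₂₀ / 6 - c₄₀ / 70
  · linear_combination c₁₀ - c₃₀ / 10
  · exact c₂₀
  · exact c₃₀
  · exact c₄₀
  · linear_combination c₀₁ - c₂₁ / 6
  · exact c₁₁
  · exact c₂₁
  · exact c₀₂
  · exact c₁₂
  · exact c₀₃
  · exact c₁₃

end IsDivFreeReconstructionCoeffs

theorem isDivFreeReconstructionCoeffs_solX {Δx Δy : ℝ} (hx : Δx ≠ 0) (hy : Δy ≠ 0)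
    (hxy : Δx + Δy ≠ 0) (ap am bp bm : ℕ → ℝ) (ω₁ : ℝ)
    (hcompat : (ap 0 - am 0) * Δy + (bp 0 - bm 0) * Δx = 0) :
    IsDivFreeReconstructionCoeffs Δx Δy ap am bp bm ω₁
      (solX Δx Δy ap am bp bm ω₁) (solX Δy Δx bp bm ap am (-ω₁)) := by
  have hyx : Δy + Δx ≠ 0 := by rwa [add_comm]
  refine ⟨(bdfmTrace_solX ..).1, (bdfmTrace_solX ..).2, (bdfmTrace_solX ..).1,
    (bdfmTrace_solX ..).2, ?_, ?_⟩
  · have hcompat' : (ap 0 - am 0) / Δx + (bp 0 - bm 0) / Δy = 0 := by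
      field_simp; linear_combination hcompat
    intro i hi j hj
    interval_cases i <;> interval_cases j <;> simp only [normalDerivCoeff, solX]
    · linear_combination hcompat'
    all_goals field_simp
    all_goals ring
  · simp only [solX]; field_simp; ring

/-- Fourth-order divergence-free reconstruction: given degree-3 face
polynomials satisfying the compatibility condition and a cell moment `ω₁`, there is a
unique BDFM-type vector field `(Dx, Dy)` matching the faces, divergence-free in the cell,
and with prescribed first curl moment `ω₁`. -/
theorem fourth_order_divfree_reconstruction
    (Δx Δy : ℝ) (hΔx : 0 < Δx) (hΔy : 0 < Δy)
    (ap am bp bm : ℕ → ℝ)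
    (hcompat : (ap 0 - am 0) * Δy + (bp 0 - bm 0) * Δx = 0)
    (ω₁ : ℝ) :
    ∃! D : (ℝ × ℝ → ℝ) × (ℝ × ℝ → ℝ),
      D.1 ∈ Submodule.span ℝ {f : ℝ × ℝ → ℝ | ∃ i j : ℕ, i + j ≤ 4 ∧ j ≤ 3 ∧
          ¬(i = 3 ∧ j = 1) ∧ ¬(i = 2 ∧ j = 2) ∧ f = fun p => phi i p.1 * phi j p.2} ∧
      D.2 ∈ Submodule.span ℝ {f : ℝ × ℝ → ℝ | ∃ i j : ℕ, i + j ≤ 4 ∧ i ≤ 3 ∧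
          ¬(i = 2 ∧ j = 2) ∧ ¬(i = 1 ∧ j = 3) ∧ f = fun p => phi i p.1 * phi j p.2} ∧
      (∀ η ∈ Set.Icc (-(1:ℝ)/2) (1/2),
        D.1 (1/2, η) = ∑ j ∈ Finset.range 4, ap j * phi j η) ∧
      (∀ η ∈ Set.Icc (-(1:ℝ)/2) (1/2),
        D.1 (-(1/2), η) = ∑ j ∈ Finset.range 4, am j * phi j η) ∧
      (∀ ξ ∈ Set.Icc (-(1:ℝ)/2) (1/2),
        D.2 (ξ, 1/2) = ∑ j ∈ Finset.range 4, bp j * phi j ξ) ∧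
      (∀ ξ ∈ Set.Icc (-(1:ℝ)/2) (1/2),
        D.2 (ξ, -(1/2)) = ∑ j ∈ Finset.range 4, bm j * phi j ξ) ∧
      (∀ p ∈ (Set.Icc (-(1:ℝ)/2) (1/2)) ×ˢ (Set.Icc (-(1:ℝ)/2) (1/2)),
        (1 / Δx) * deriv (fun ξ => D.1 (ξ, p.2)) p.1
          + (1 / Δy) * deriv (fun η => D.2 (p.1, η)) p.2 = 0) ∧
      (12 * ∫ ξ in (-(1:ℝ)/2)..(1/2), ∫ η in (-(1:ℝ)/2)..(1/2),
        (D.2 (ξ, η) * ξ - D.1 (ξ, η) * η)) = ω₁ := by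
  have hx := hΔx.ne'
  have hy := hΔy.ne'
  have hxy : Δx + Δy ≠ 0 := by positivity
  rw [bdfmX_basis_eq_image, bdfmY_basis_eq_image]
  change ∃! D : (ℝ × ℝ → ℝ) × (ℝ × ℝ → ℝ), D.1 ∈ _ ∧ D.2 ∈ _ ∧
    IsDivFreeReconstruction Δx Δy ap am bp bm ω₁ D.1 D.2
  refine ⟨(bdfmX (solX Δx Δy ap am bp bm ω₁), bdfmY (solX Δy Δx bp bm ap am (-ω₁))),
    ⟨mem_span_bdfmX_iff.mpr ⟨_, rfl⟩, mem_span_bdfmY_iff.mpr ⟨_, rfl⟩,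
      (isDivFreeReconstruction_bdfm_iff ..).mpr
        (isDivFreeReconstructionCoeffs_solX hx hy hxy ap am bp bm ω₁ hcompat)⟩, ?_⟩
  rintro ⟨Dx, Dy⟩ ⟨hDx, hDy, hD⟩
  obtain ⟨c, rfl⟩ := mem_span_bdfmX_iff.mp hDx
  obtain ⟨d, rfl⟩ := mem_span_bdfmY_iff.mp hDy
  have h := (isDivFreeReconstruction_bdfm_iff ..).mp hD
  exact Prod.ext (bdfmX_congr (h.eq_solX hx hy hxy))
    (bdfmY_congr (h.symm.eq_solX hy hx (by rwa [add_comm])))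
end

section
/- Fix Δx, Δy > 0. The fourth-order reconstruction problem is under-determined by the face data alone: the set of vector fields D = (Dx, Dy) on [−1/2,1/2]², with Dx in the span of { φ_i(ξ)φ_j(η) : i+j ≤ 4, j ≤ 3 } with zero coefficients on φ₃(ξ)φ₁(η) and φ₂(ξ)φ₂(η), and Dy in the span of { φ_i(ξ)φ_j(η) : i+j ≤ 4, i ≤ 3 } with zero coefficients on φ₂(ξ)φ₂(η) and φ₁(ξ)φ₃(η), such that Dx(±1/2, η) ≡ 0, Dy(ξ, ±1/2) ≡ 0 and (1/Δx)∂_ξ Dx + (1/Δy)∂_η Dy ≡ 0, is a one-dimensional real vector space. -/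
open Submodule

local notation "𝕀" => Set.Icc (-(1:ℝ)/2) (1/2)

def xModes : Set (ℝ × ℝ → ℝ) :=
  {f | ∃ i j : ℕ, i + j ≤ 4 ∧ j ≤ 3 ∧ ¬(i = 3 ∧ j = 1) ∧ ¬(i = 2 ∧ j = 2) ∧
    f = fun p => phi i p.1 * phi j p.2}

def yModes : Set (ℝ × ℝ → ℝ) :=
  {f | ∃ i j : ℕ, i + j ≤ 4 ∧ i ≤ 3 ∧ ¬(i = 2 ∧ j = 2) ∧ ¬(i = 1 ∧ j = 3) ∧
    f = fun p => phi i p.1 * phi j p.2}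

def xModeIndex : Fin 12 → ℕ × ℕ :=
  ![(0, 0), (1, 0), (2, 0), (3, 0), (4, 0), (0, 1), (1, 1), (2, 1), (0, 2), (1, 2), (0, 3), (1, 3)]

theorem exists_xModeIndex_eq {i j : ℕ} (hij : i + j ≤ 4) (hj : j ≤ 3) (h31 : ¬(i = 3 ∧ j = 1))
    (h22 : ¬(i = 2 ∧ j = 2)) : ∃ k, xModeIndex k = (i, j) := by
  have hi : i ≤ 4 := by omega
  interval_cases j <;> interval_cases i <;> first | omega | decide

theorem exists_coeffs_of_mem_span_xModes {g : ℝ × ℝ → ℝ} (hg : g ∈ span ℝ xModes) :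
    ∃ a : Fin 12 → ℝ, ∀ ξ η,
      g (ξ, η) = ∑ k, a k * (phi (xModeIndex k).1 ξ * phi (xModeIndex k).2 η) := by
  have hsub :
      xModes ⊆ Set.range fun k p => phi (xModeIndex k).1 p.1 * phi (xModeIndex k).2 p.2 := by
    rintro _ ⟨i, j, hij, hj, h31, h22, rfl⟩
    obtain ⟨k, hk⟩ := exists_xModeIndex_eq hij hj h31 h22
    exact ⟨k, by simp [hk]⟩
  obtain ⟨a, rfl⟩ := (mem_span_range_iff_exists_fun ℝ).mp (span_mono hsub hg)
  exact ⟨a, fun ξ η => by simp⟩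

theorem mem_span_yModes_iff {g : ℝ × ℝ → ℝ} :
    g ∈ span ℝ yModes ↔ ∃ h ∈ span ℝ xModes, h ∘ Prod.swap = g := by
  have hmodes : yModes = LinearMap.funLeft ℝ ℝ Prod.swap '' xModes := by
    ext f
    constructor
    · rintro ⟨i, j, hij, hi, h22, h13, rfl⟩
      exact ⟨_, ⟨j, i, by omega, hi, by omega, by omega, rfl⟩, funext fun p => mul_comm _ _⟩
    · rintro ⟨_, ⟨i, j, hij, hj, h31, h22, rfl⟩, rfl⟩
      exact ⟨j, i, by omega, hj, by omega, by omega, funext fun p => mul_comm _ _⟩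
  rw [hmodes, span_image, mem_map]
  rfl

noncomputable def traceFreeForm (b₀ b₁ b₂ q ξ η : ℝ) : ℝ :=
  (ξ ^ 2 - 1 / 4) * (b₀ + b₁ * ξ + b₂ * ξ ^ 2 + q * η)

theorem exists_traceFreeForm_of_mem_span_xModes {g : ℝ × ℝ → ℝ} (hg : g ∈ span ℝ xModes)
    (hright : ∀ η ∈ 𝕀, g (1 / 2, η) = 0) (hleft : ∀ η ∈ 𝕀, g (-(1 / 2), η) = 0) :
    ∃ b₀ b₁ b₂ q, g = fun p => traceFreeForm b₀ b₁ b₂ q p.1 p.2 := by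
  obtain ⟨a, ha⟩ := exists_coeffs_of_mem_span_xModes hg
  simp only [Fin.sum_univ_succ, Fin.sum_univ_zero, xModeIndex, phi, Fin.isValue,
    Matrix.cons_val_zero, Matrix.cons_val_one, Matrix.cons_val, Fin.succ_zero_eq_one,
    Fin.succ_one_eq_two, Fin.reduceSucc, mul_one, one_mul, add_zero] at ha
  -- on each face `g` is a cubic in `η`, so four samples of it suffice
  have t₁ := hright (1 / 2) (by norm_num)
  have t₂ := hright (-1 / 2) (by norm_num)
  have t₃ := hright (1 / 4) (by norm_num)
  have t₄ := hright (-1 / 4) (by norm_num)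
  have t₅ := hleft (1 / 2) (by norm_num)
  have t₆ := hleft (-1 / 2) (by norm_num)
  have t₇ := hleft (1 / 4) (by norm_num)
  have t₈ := hleft (-1 / 4) (by norm_num)
  rw [ha] at t₁ t₂ t₃ t₄ t₅ t₆ t₇ t₈
  norm_num at t₁ t₂ t₃ t₄ t₅ t₆ t₇ t₈
  have h₈ : a 8 = 0 := by linarith
  have h₉ : a 9 = 0 := by linarith
  have h₁₀ : a 10 = 0 := by linarith
  have h₁₁ : a 11 = 0 := by linarith
  have h₆ : a 6 = 0 := by linarith
  have h₅ : a 5 = -a 7 / 6 := by linarith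
  have h₁ : a 1 = -a 3 / 10 := by linarith
  have h₀ : a 0 = -a 2 / 6 - a 4 / 70 := by linarith
  refine ⟨a 2 + a 4 / 28, a 3, a 4, a 7, funext fun p => ?_⟩
  rw [ha, h₀, h₁, h₅, h₆, h₈, h₉, h₁₀, h₁₁, traceFreeForm]
  ring

theorem deriv_traceFreeForm (b₀ b₁ b₂ q ξ η : ℝ) :
    deriv (fun t => traceFreeForm b₀ b₁ b₂ q t η) ξ =
      2 * ξ * (b₀ + b₁ * ξ + b₂ * ξ ^ 2 + q * η) + (ξ ^ 2 - 1 / 4) * (b₁ + 2 * b₂ * ξ) := by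
  have hbubble : HasDerivAt (fun t : ℝ => t ^ 2 - 1 / 4) (2 * ξ) ξ := by
    simpa using (hasDerivAt_pow 2 ξ).sub_const (1 / 4)
  have hfactor : HasDerivAt (fun t => b₀ + b₁ * t + b₂ * t ^ 2 + q * η) (b₁ + 2 * b₂ * ξ) ξ := by
    have h := ((((hasDerivAt_id ξ).const_mul b₁).const_add b₀).add
      ((hasDerivAt_pow 2 ξ).const_mul b₂)).add_const (q * η)
    exact h.congr_deriv (by simp only [mul_one, Nat.cast_ofNat, Nat.add_one_sub_one, pow_one]; ring)
  exact (hbubble.mul hfactor).deriv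

theorem traceFreeForm_coeffs_eq_zero_of_deriv_const {b₀ b₁ b₂ q : ℝ}
    (h : ∀ ξ ∈ 𝕀, deriv (fun t => traceFreeForm b₀ b₁ b₂ q t 0) ξ =
      deriv (fun t => traceFreeForm b₀ b₁ b₂ q t 0) 0) :
    b₀ = 0 ∧ b₁ = 0 ∧ b₂ = 0 := by
  have h₁ := h (1 / 2) (by norm_num)
  have h₂ := h (-1 / 2) (by norm_num)
  have h₃ := h (1 / 4) (by norm_num)
  simp only [deriv_traceFreeForm] at h₁ h₂ h₃
  norm_num at h₁ h₂ h₃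
  exact ⟨by linarith, by linarith, by linarith⟩

theorem traceFreeForm_coeffs_eq_zero_of_divergence_eq_zero {Δx Δy b₀ b₁ b₂ q c₀ c₁ c₂ r : ℝ}
    (hΔx : Δx ≠ 0)
    (h : ∀ p ∈ 𝕀 ×ˢ 𝕀, 1 / Δx * deriv (fun ξ => traceFreeForm b₀ b₁ b₂ q ξ p.2) p.1
        + 1 / Δy * deriv (fun η => traceFreeForm c₀ c₁ c₂ r η p.1) p.2 = 0) :
    b₀ = 0 ∧ b₁ = 0 ∧ b₂ = 0 := by
  refine traceFreeForm_coeffs_eq_zero_of_deriv_const (q := q) fun ξ hξ => ?_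
  set F := fun t => traceFreeForm b₀ b₁ b₂ q t 0
  have h₁ : 1 / Δx * deriv F ξ + 1 / Δy * deriv (fun η => traceFreeForm c₀ c₁ c₂ r η ξ) 0 = 0 :=
    h (ξ, 0) ⟨hξ, by norm_num⟩
  have h₀ : 1 / Δx * deriv F 0 + 1 / Δy * deriv (fun η => traceFreeForm c₀ c₁ c₂ r η 0) 0 = 0 :=
    h (0, 0) ⟨by norm_num, by norm_num⟩
  rw [deriv_traceFreeForm c₀ c₁ c₂ r] at h₁ h₀
  have hdiff : 1 / Δx * (deriv F ξ - deriv F 0) = 0 := by linear_combination h₁ - h₀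
  simpa [hΔx, sub_eq_zero] using hdiff

theorem divergence_traceFreeForm_eq_zero_iff {Δx Δy b₀ b₁ b₂ q c₀ c₁ c₂ r : ℝ}
    (hΔx : Δx ≠ 0) (hΔy : Δy ≠ 0) :
    (∀ p ∈ 𝕀 ×ˢ 𝕀, 1 / Δx * deriv (fun ξ => traceFreeForm b₀ b₁ b₂ q ξ p.2) p.1
        + 1 / Δy * deriv (fun η => traceFreeForm c₀ c₁ c₂ r η p.1) p.2 = 0) ↔
      (b₀ = 0 ∧ b₁ = 0 ∧ b₂ = 0) ∧ (c₀ = 0 ∧ c₁ = 0 ∧ c₂ = 0) ∧ r = -(Δy / Δx) * q := by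
  constructor
  · intro h
    obtain ⟨rfl, rfl, rfl⟩ := traceFreeForm_coeffs_eq_zero_of_divergence_eq_zero hΔx h
    obtain ⟨rfl, rfl, rfl⟩ := traceFreeForm_coeffs_eq_zero_of_divergence_eq_zero hΔy
      fun p hp => (add_comm _ _).trans (h p.swap ⟨hp.2, hp.1⟩)
    have hcorner := h (1 / 2, 1 / 2) ⟨by norm_num, by norm_num⟩
    simp only [deriv_traceFreeForm] at hcorner
    refine ⟨⟨rfl, rfl, rfl⟩, ⟨rfl, rfl, rfl⟩, ?_⟩
    field_simp at hcorner ⊢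
    linarith
  · rintro ⟨⟨rfl, rfl, rfl⟩, ⟨rfl, rfl, rfl⟩, rfl⟩ p -
    simp only [deriv_traceFreeForm]
    field_simp
    ring

theorem traceFreeForm_zero_mem_span_xModes (q : ℝ) :
    (fun p : ℝ × ℝ => traceFreeForm 0 0 0 q p.1 p.2) ∈ span ℝ xModes := by
  have h₂₁ : (fun p : ℝ × ℝ => phi 2 p.1 * phi 1 p.2) ∈ span ℝ xModes :=
    subset_span ⟨2, 1, by norm_num, by norm_num, by norm_num, by norm_num, rfl⟩
  have h₀₁ : (fun p : ℝ × ℝ => phi 0 p.1 * phi 1 p.2) ∈ span ℝ xModes :=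
    subset_span ⟨0, 1, by norm_num, by norm_num, by norm_num, by norm_num, rfl⟩
  have hcomb : (fun p : ℝ × ℝ => traceFreeForm 0 0 0 q p.1 p.2) =
      q • ((fun p : ℝ × ℝ => phi 2 p.1 * phi 1 p.2) -
        (1 / 6 : ℝ) • fun p => phi 0 p.1 * phi 1 p.2) := by
    funext p
    simp only [traceFreeForm, phi, Pi.smul_apply, Pi.sub_apply, smul_eq_mul]
    ring
  rw [hcomb]
  exact smul_mem _ _ (sub_mem h₂₁ (smul_mem _ _ h₀₁))

noncomputable def kernelField (Δx Δy : ℝ) : (ℝ × ℝ → ℝ) × (ℝ × ℝ → ℝ) :=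
  (fun p => traceFreeForm 0 0 0 1 p.1 p.2, fun p => traceFreeForm 0 0 0 (-(Δy / Δx)) p.2 p.1)

theorem smul_kernelField (Δx Δy c : ℝ) :
    c • kernelField Δx Δy = (fun p => traceFreeForm 0 0 0 c p.1 p.2,
      (fun p => traceFreeForm 0 0 0 (-(Δy / Δx) * c) p.1 p.2) ∘ Prod.swap) := by
  ext p <;> simp [kernelField, traceFreeForm] <;> ring

theorem kernelField_ne_zero (Δx Δy : ℝ) : kernelField Δx Δy ≠ 0 := by
  intro h
  have h₀₁ := congrFun (congrArg Prod.fst h) (0, 1)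
  norm_num [kernelField, traceFreeForm] at h₀₁

/-- The fourth-order reconstruction problem is under-determined by the
face data alone: the space of BDFM-type fields with vanishing face traces and vanishing
physical divergence is a one-dimensional real vector space. -/
theorem fourth_order_reconstruction_kernel_one_dimensional
    (Δx Δy : ℝ) (hΔx : 0 < Δx) (hΔy : 0 < Δy) :
    ∃ D₀ : (ℝ × ℝ → ℝ) × (ℝ × ℝ → ℝ), D₀ ≠ 0 ∧
      {D : (ℝ × ℝ → ℝ) × (ℝ × ℝ → ℝ) |
        D.1 ∈ Submodule.span ℝ {f : ℝ × ℝ → ℝ | ∃ i j : ℕ, i + j ≤ 4 ∧ j ≤ 3 ∧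
            ¬(i = 3 ∧ j = 1) ∧ ¬(i = 2 ∧ j = 2) ∧ f = fun p => phi i p.1 * phi j p.2} ∧
        D.2 ∈ Submodule.span ℝ {f : ℝ × ℝ → ℝ | ∃ i j : ℕ, i + j ≤ 4 ∧ i ≤ 3 ∧
            ¬(i = 2 ∧ j = 2) ∧ ¬(i = 1 ∧ j = 3) ∧ f = fun p => phi i p.1 * phi j p.2} ∧
        (∀ η ∈ Set.Icc (-(1:ℝ)/2) (1/2), D.1 (1/2, η) = 0) ∧
        (∀ η ∈ Set.Icc (-(1:ℝ)/2) (1/2), D.1 (-(1/2), η) = 0) ∧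
        (∀ ξ ∈ Set.Icc (-(1:ℝ)/2) (1/2), D.2 (ξ, 1/2) = 0) ∧
        (∀ ξ ∈ Set.Icc (-(1:ℝ)/2) (1/2), D.2 (ξ, -(1/2)) = 0) ∧
        (∀ p ∈ (Set.Icc (-(1:ℝ)/2) (1/2)) ×ˢ (Set.Icc (-(1:ℝ)/2) (1/2)),
          (1 / Δx) * deriv (fun ξ => D.1 (ξ, p.2)) p.1
            + (1 / Δy) * deriv (fun η => D.2 (p.1, η)) p.2 = 0)}
      = Set.range (fun c : ℝ => c • D₀) := by
  refine ⟨kernelField Δx Δy, kernelField_ne_zero Δx Δy, Set.Subset.antisymm ?_ ?_⟩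
  · rintro ⟨Dx, Dy⟩ ⟨hx, hy, hx₁, hx₂, hy₁, hy₂, hdiv⟩
    obtain ⟨b₀, b₁, b₂, q, rfl⟩ := exists_traceFreeForm_of_mem_span_xModes hx hx₁ hx₂
    obtain ⟨h, hh, rfl⟩ := mem_span_yModes_iff.mp hy
    obtain ⟨c₀, c₁, c₂, r, rfl⟩ := exists_traceFreeForm_of_mem_span_xModes hh hy₁ hy₂
    obtain ⟨⟨rfl, rfl, rfl⟩, ⟨rfl, rfl, rfl⟩, rfl⟩ :=
      (divergence_traceFreeForm_eq_zero_iff hΔx.ne' hΔy.ne').mp hdiv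
    exact ⟨q, smul_kernelField Δx Δy q⟩
  · rintro _ ⟨c, rfl⟩
    dsimp only
    rw [smul_kernelField]
    refine ⟨traceFreeForm_zero_mem_span_xModes c,
      mem_span_yModes_iff.mpr ⟨_, traceFreeForm_zero_mem_span_xModes _, rfl⟩,
      ?_, ?_, ?_, ?_,
      (divergence_traceFreeForm_eq_zero_iff hΔx.ne' hΔy.ne').mpr
        ⟨⟨rfl, rfl, rfl⟩, ⟨rfl, rfl, rfl⟩, rfl⟩⟩ <;>
    intros <;> norm_num [traceFreeForm]
end

section
/- Fix Δx, Δy > 0. Let D_x^±(η) = Σ_{j=0}^{2} a_j^± φ_j(η) and D_y^±(ξ) = Σ_{j=0}^{2} b_j^± φ_j(ξ) be degree-2 face polynomials satisfying (a₀⁺ − a₀⁻)Δy + (b₀⁺ − b₀⁻)Δx = 0. Then there exists exactly one vector field D = (Dx, Dy) on [−1/2,1/2]² with Dx in the span of { 1, φ₁(ξ), φ₁(η), φ₂(ξ), φ₁(ξ)φ₁(η), φ₂(η), φ₃(ξ), φ₁(ξ)φ₂(η) } and Dy in the span of { 1, φ₁(ξ), φ₁(η), φ₂(ξ), φ₁(ξ)φ₁(η),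 φ₂(η), φ₂(ξ)φ₁(η), φ₃(η) } such that Dx(±1/2, η) = D_x^±(η), Dy(ξ, ±1/2) = D_y^±(ξ), and (1/Δx)∂_ξ Dx + (1/Δy)∂_η Dy ≡ 0; in particular the face data alone determines the third-order divergence-free reconstruction. -/
open Set

noncomputable def spanX : Submodule ℝ (ℝ × ℝ → ℝ) :=
  Submodule.span ℝ
    ({fun p => phi 0 p.1 * phi 0 p.2, fun p => phi 1 p.1 * phi 0 p.2,
      fun p => phi 0 p.1 * phi 1 p.2, fun p => phi 2 p.1 * phi 0 p.2,
      fun p => phi 1 p.1 * phi 1 p.2, fun p => phi 0 p.1 * phi 2 p.2,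
      fun p => phi 3 p.1 * phi 0 p.2, fun p => phi 1 p.1 * phi 2 p.2} : Set (ℝ × ℝ → ℝ))

noncomputable def spanY : Submodule ℝ (ℝ × ℝ → ℝ) :=
  Submodule.span ℝ
    ({fun p => phi 0 p.1 * phi 0 p.2, fun p => phi 1 p.1 * phi 0 p.2,
      fun p => phi 0 p.1 * phi 1 p.2, fun p => phi 2 p.1 * phi 0 p.2,
      fun p => phi 1 p.1 * phi 1 p.2, fun p => phi 0 p.1 * phi 2 p.2,
      fun p => phi 2 p.1 * phi 1 p.2, fun p => phi 0 p.1 * phi 3 p.2} : Set (ℝ × ℝ → ℝ))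

theorem spanY_eq_map_swap :
    spanY = spanX.map (LinearEquiv.funCongrLeft ℝ ℝ (Equiv.prodComm ℝ ℝ)).toLinearMap := by
  rw [spanX, spanY, Submodule.map_span]
  congr 1
  have swap_tensor (i j : ℕ) : LinearEquiv.funCongrLeft ℝ ℝ (Equiv.prodComm ℝ ℝ)
      (fun p => phi i p.1 * phi j p.2) = fun p => phi j p.1 * phi i p.2 := by
    ext p; exact mul_comm _ _
  simp only [image_insert_eq, image_singleton, LinearEquiv.coe_coe, swap_tensor]
  ext f
  simp only [mem_insert_iff, mem_singleton_iff]
  tauto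

theorem mem_spanY_iff {f : ℝ × ℝ → ℝ} : f ∈ spanY ↔ f ∘ Prod.swap ∈ spanX := by
  rw [spanY_eq_map_swap, Submodule.mem_map_equiv]
  rfl

noncomputable def facePoly (a : ℕ → ℝ) (t : ℝ) : ℝ := ∑ j ∈ Finset.range 3, a j * phi j t

/-- The field with traces `facePoly ap`, `facePoly am` on the faces `p.1 = 1/2`, `p.1 = -1/2`;
`C` and `E` are the coefficients of `φ₂(p.1)` and `φ₃(p.1)`, which the traces leave free. -/
noncomputable def faceField (ap am : ℕ → ℝ) (C E : ℝ) (p : ℝ × ℝ) : ℝ :=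
  (facePoly ap p.2 + facePoly am p.2) / 2 + p.1 * (facePoly ap p.2 - facePoly am p.2)
    + (p.1 ^ 2 - 1 / 4) * (C + E * p.1)

theorem hasDerivAt_faceField (ap am : ℕ → ℝ) (C E s t : ℝ) :
    HasDerivAt (fun x => faceField ap am C E (x, t))
      (facePoly ap t - facePoly am t + 2 * C * s + 3 * E * phi 2 s) s := by
  have hs := hasDerivAt_id' s
  have h := ((hasDerivAt_const s ((facePoly ap t + facePoly am t) / 2)).add
    (hs.mul_const (facePoly ap t - facePoly am t))).add
    (((hasDerivAt_pow 2 s).sub_const (1 / 4)).mul ((hs.const_mul E).const_add C))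
  refine h.congr_deriv ?_
  simp only [phi]; ring

theorem faceField_apply_half (ap am : ℕ → ℝ) (C E t : ℝ) :
    faceField ap am C E (1 / 2, t) = facePoly ap t := by
  simp only [faceField]; ring

theorem faceField_apply_neg_half (ap am : ℕ → ℝ) (C E t : ℝ) :
    faceField ap am C E (-(1 / 2), t) = facePoly am t := by
  simp only [faceField]; ring

theorem faceField_mem_spanX (ap am : ℕ → ℝ) (C E : ℝ) : faceField ap am C E ∈ spanX := by
  have h : faceField ap am C E =
      ((ap 0 + am 0) / 2 - C / 6) • (fun p => phi 0 p.1 * phi 0 p.2)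
      + (ap 0 - am 0 - E / 10) • (fun p => phi 1 p.1 * phi 0 p.2)
      + ((ap 1 + am 1) / 2) • (fun p => phi 0 p.1 * phi 1 p.2)
      + C • (fun p => phi 2 p.1 * phi 0 p.2)
      + (ap 1 - am 1) • (fun p => phi 1 p.1 * phi 1 p.2)
      + ((ap 2 + am 2) / 2) • (fun p => phi 0 p.1 * phi 2 p.2)
      + E • (fun p => phi 3 p.1 * phi 0 p.2)
      + (ap 2 - am 2) • (fun p => phi 1 p.1 * phi 2 p.2) := by
    ext p
    simp only [faceField, facePoly, Finset.sum_range_succ, Finset.sum_range_zero, phi,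
      Pi.add_apply, Pi.smul_apply, smul_eq_mul]
    ring
  rw [h, spanX]
  repeat' apply add_mem
  all_goals exact Submodule.smul_mem _ _ (Submodule.subset_span (by simp))

theorem coeffs_eq_zero_of_forall_mem_Icc {c₀ c₁ c₂ : ℝ}
    (h : ∀ t ∈ Icc (-(1 : ℝ) / 2) (1 / 2), c₀ + c₁ * t + c₂ * phi 2 t = 0) :
    c₀ = 0 ∧ c₁ = 0 ∧ c₂ = 0 := by
  have h₀ := h 0 (by norm_num)
  have hr := h (1 / 2) (by norm_num)
  have hl := h (-1 / 2) (by norm_num)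
  norm_num [phi] at h₀ hr hl
  refine ⟨?_, ?_, ?_⟩ <;> linarith

theorem coeffs_eq_zero_of_forall_mem_square {c₀ c₁ c₂ c₃ c₄ : ℝ}
    (h : ∀ p ∈ Icc (-(1 : ℝ) / 2) (1 / 2) ×ˢ Icc (-(1 : ℝ) / 2) (1 / 2),
      c₀ + c₁ * p.1 + c₂ * p.2 + c₃ * phi 2 p.1 + c₄ * phi 2 p.2 = 0) :
    c₀ = 0 ∧ c₁ = 0 ∧ c₂ = 0 ∧ c₃ = 0 ∧ c₄ = 0 := by
  have h0 : (0 : ℝ) ∈ Icc (-(1 : ℝ) / 2) (1 / 2) := by norm_num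
  obtain ⟨hx₀, hx₁, hx₃⟩ := coeffs_eq_zero_of_forall_mem_Icc (c₀ := c₀ - c₄ / 12) (c₁ := c₁)
    (c₂ := c₃) fun t ht => by have := h (t, 0) ⟨ht, h0⟩; norm_num [phi] at this ⊢; linarith
  obtain ⟨hy₀, hy₂, hy₄⟩ := coeffs_eq_zero_of_forall_mem_Icc (c₀ := c₀ - c₃ / 12) (c₁ := c₂)
    (c₂ := c₄) fun t ht => by have := h (0, t) ⟨h0, ht⟩; norm_num [phi] at this ⊢; linarith
  refine ⟨?_, hx₁, hy₂, hx₃, hy₄⟩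
  linarith

theorem exists_eq_faceField {f : ℝ × ℝ → ℝ} {ap am : ℕ → ℝ} (hf : f ∈ spanX)
    (hr : ∀ t ∈ Icc (-(1 : ℝ) / 2) (1 / 2), f (1 / 2, t) = facePoly ap t)
    (hl : ∀ t ∈ Icc (-(1 : ℝ) / 2) (1 / 2), f (-(1 / 2), t) = facePoly am t) :
    ∃ C E, f = faceField ap am C E := by
  simp only [spanX, Submodule.mem_span_insert, Submodule.mem_span_singleton] at hf
  obtain ⟨e₀, _, ⟨e₁, _, ⟨e₂, _, ⟨e₃, _, ⟨e₄, _, ⟨e₅, _, ⟨e₆, _, ⟨e₇, rfl⟩, rfl⟩, rfl⟩, rfl⟩,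
    rfl⟩, rfl⟩, rfl⟩, rfl⟩ := hf
  simp only [facePoly, Finset.sum_range_succ, Finset.sum_range_zero, phi, Pi.add_apply,
    Pi.smul_apply, smul_eq_mul] at hr hl
  obtain ⟨r₀, r₁, r₂⟩ := coeffs_eq_zero_of_forall_mem_Icc
    (c₀ := e₀ + e₁ / 2 + e₃ / 6 + e₆ / 20 - ap 0) (c₁ := e₂ + e₄ / 2 - ap 1)
    (c₂ := e₅ + e₇ / 2 - ap 2) fun t ht => by simp only [phi]; linear_combination hr t ht
  obtain ⟨l₀, l₁, l₂⟩ := coeffs_eq_zero_of_forall_mem_Icc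
    (c₀ := e₀ - e₁ / 2 + e₃ / 6 - e₆ / 20 - am 0) (c₁ := e₂ - e₄ / 2 - am 1)
    (c₂ := e₅ - e₇ / 2 - am 2) fun t ht => by simp only [phi]; linear_combination hl t ht
  refine ⟨e₃, e₆, funext fun p => ?_⟩
  simp only [faceField, facePoly, Finset.sum_range_succ, Finset.sum_range_zero, phi, Pi.add_apply,
    Pi.smul_apply, smul_eq_mul]
  linear_combination (r₀ + l₀) / 2 + p.1 * (r₀ - l₀) + p.2 * (r₁ + l₁) / 2 + p.1 * p.2 * (r₁ - l₁)
    + (p.2 ^ 2 - 1 / 12) * (r₂ + l₂) / 2 + p.1 * (p.2 ^ 2 - 1 / 12) * (r₂ - l₂)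

noncomputable def divergence (Δx Δy : ℝ) (D : (ℝ × ℝ → ℝ) × (ℝ × ℝ → ℝ)) (p : ℝ × ℝ) : ℝ :=
  (1 / Δx) * deriv (fun ξ => D.1 (ξ, p.2)) p.1 + (1 / Δy) * deriv (fun η => D.2 (p.1, η)) p.2

theorem divergence_faceField (Δx Δy : ℝ) (ap am bp bm : ℕ → ℝ) (C E C' E' : ℝ) (p : ℝ × ℝ) :
    divergence Δx Δy (faceField ap am C E, faceField bp bm C' E' ∘ Prod.swap) p =
      ((ap 0 - am 0) / Δx + (bp 0 - bm 0) / Δy) + (2 * C / Δx + (bp 1 - bm 1) / Δy) * p.1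
        + ((ap 1 - am 1) / Δx + 2 * C' / Δy) * p.2
        + (3 * E / Δx + (bp 2 - bm 2) / Δy) * phi 2 p.1
        + ((ap 2 - am 2) / Δx + 3 * E' / Δy) * phi 2 p.2 := by
  simp only [divergence, Function.comp_apply, Prod.swap_prod_mk]
  rw [(hasDerivAt_faceField ap am C E p.1 p.2).deriv,
    (hasDerivAt_faceField bp bm C' E' p.2 p.1).deriv]
  simp only [facePoly, Finset.sum_range_succ, Finset.sum_range_zero, phi]
  ring

theorem divergence_faceField_eq_zero_iff {Δx Δy : ℝ} (hΔx : Δx ≠ 0) (hΔy : Δy ≠ 0)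
    {ap am bp bm : ℕ → ℝ} (hcompat : (ap 0 - am 0) * Δy + (bp 0 - bm 0) * Δx = 0)
    {C E C' E' : ℝ} :
    (∀ p ∈ Icc (-(1 : ℝ) / 2) (1 / 2) ×ˢ Icc (-(1 : ℝ) / 2) (1 / 2),
      divergence Δx Δy (faceField ap am C E, faceField bp bm C' E' ∘ Prod.swap) p = 0) ↔
      C = -(Δx * (bp 1 - bm 1)) / (2 * Δy) ∧ E = -(Δx * (bp 2 - bm 2)) / (3 * Δy) ∧
        C' = -(Δy * (ap 1 - am 1)) / (2 * Δx) ∧ E' = -(Δy * (ap 2 - am 2)) / (3 * Δx) := by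
  simp only [divergence_faceField]
  -- the constant coefficient of the divergence is `hcompat / (Δx Δy)`
  constructor
  · intro h
    obtain ⟨-, h₁, h₂, h₃, h₄⟩ := coeffs_eq_zero_of_forall_mem_square h
    field_simp at h₁ h₂ h₃ h₄ ⊢
    refine ⟨?_, ?_, ?_, ?_⟩ <;> linarith
  · rintro ⟨rfl, rfl, rfl, rfl⟩ p -
    field_simp
    linear_combination hcompat

/-- Third-order divergence-free reconstruction: given degree-2 face
polynomials satisfying the compatibility condition, the face data alone determines a
unique divergence-free vector field in the given spans matching the faces. -/
theorem third_order_divfree_reconstruction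
    (Δx Δy : ℝ) (hΔx : 0 < Δx) (hΔy : 0 < Δy)
    (ap am bp bm : ℕ → ℝ)
    (hcompat : (ap 0 - am 0) * Δy + (bp 0 - bm 0) * Δx = 0) :
    ∃! D : (ℝ × ℝ → ℝ) × (ℝ × ℝ → ℝ),
      D.1 ∈ Submodule.span ℝ
        ({fun p => phi 0 p.1 * phi 0 p.2, fun p => phi 1 p.1 * phi 0 p.2,
          fun p => phi 0 p.1 * phi 1 p.2, fun p => phi 2 p.1 * phi 0 p.2,
          fun p => phi 1 p.1 * phi 1 p.2, fun p => phi 0 p.1 * phi 2 p.2,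
          fun p => phi 3 p.1 * phi 0 p.2, fun p => phi 1 p.1 * phi 2 p.2} :
          Set (ℝ × ℝ → ℝ)) ∧
      D.2 ∈ Submodule.span ℝ
        ({fun p => phi 0 p.1 * phi 0 p.2, fun p => phi 1 p.1 * phi 0 p.2,
          fun p => phi 0 p.1 * phi 1 p.2, fun p => phi 2 p.1 * phi 0 p.2,
          fun p => phi 1 p.1 * phi 1 p.2, fun p => phi 0 p.1 * phi 2 p.2,
          fun p => phi 2 p.1 * phi 1 p.2, fun p => phi 0 p.1 * phi 3 p.2} :
          Set (ℝ × ℝ → ℝ)) ∧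
      (∀ η ∈ Set.Icc (-(1:ℝ)/2) (1/2),
        D.1 (1/2, η) = ∑ j ∈ Finset.range 3, ap j * phi j η) ∧
      (∀ η ∈ Set.Icc (-(1:ℝ)/2) (1/2),
        D.1 (-(1/2), η) = ∑ j ∈ Finset.range 3, am j * phi j η) ∧
      (∀ ξ ∈ Set.Icc (-(1:ℝ)/2) (1/2),
        D.2 (ξ, 1/2) = ∑ j ∈ Finset.range 3, bp j * phi j ξ) ∧
      (∀ ξ ∈ Set.Icc (-(1:ℝ)/2) (1/2),
        D.2 (ξ, -(1/2)) = ∑ j ∈ Finset.range 3, bm j * phi j ξ) ∧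
      (∀ p ∈ (Set.Icc (-(1:ℝ)/2) (1/2)) ×ˢ (Set.Icc (-(1:ℝ)/2) (1/2)),
        (1 / Δx) * deriv (fun ξ => D.1 (ξ, p.2)) p.1
          + (1 / Δy) * deriv (fun η => D.2 (p.1, η)) p.2 = 0) := by
  have hΔx' := hΔx.ne'
  have hΔy' := hΔy.ne'
  refine ⟨(faceField ap am (-(Δx * (bp 1 - bm 1)) / (2 * Δy)) (-(Δx * (bp 2 - bm 2)) / (3 * Δy)),
      faceField bp bm (-(Δy * (ap 1 - am 1)) / (2 * Δx)) (-(Δy * (ap 2 - am 2)) / (3 * Δx)) ∘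
        Prod.swap),
    ⟨faceField_mem_spanX _ _ _ _, mem_spanY_iff.2 (faceField_mem_spanX _ _ _ _),
      fun t _ => faceField_apply_half .., fun t _ => faceField_apply_neg_half ..,
      fun t _ => faceField_apply_half .., fun t _ => faceField_apply_neg_half ..,
      (divergence_faceField_eq_zero_iff hΔx' hΔy' hcompat).2 ⟨rfl, rfl, rfl, rfl⟩⟩, ?_⟩
  rintro ⟨Dx, Dy⟩ ⟨hDx, hDy, hxr, hxl, hyr, hyl, hdiv⟩
  obtain ⟨C, E, rfl⟩ := exists_eq_faceField hDx hxr hxl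
  obtain ⟨C', E', hDy'⟩ := exists_eq_faceField (mem_spanY_iff.1 hDy) hyr hyl
  obtain rfl : Dy = faceField bp bm C' E' ∘ Prod.swap := by rw [← hDy']; rfl
  obtain ⟨rfl, rfl, rfl, rfl⟩ := (divergence_faceField_eq_zero_iff hΔx' hΔy' hcompat).1 hdiv
  rfl
end

section
/- Consider the first-order constraint-preserving scheme on an N × N periodic grid (indices in ℤ/N) with constant ε, μ > 0, c = 1/√(εμ), and square cells Δx = Δy = h > 0. Assume the time-dependent grid functions (Dx)_{i+1/2,j}, (Dy)_{i,j+1/2}, (Bz)_{i,j} are differentiable and satisfy the semi-discrete scheme with the dissipative multidimensional Riemann fluxes. Then the discrete total energy E*_h(t) = Σ_{i,j} [ (Dx)²_{i+1/2,j} + (Dy)²_{i,j+1/2} ] h²/(2ε) + Σ_{i,j} (Bz)²_{i,j} h²/(2μ) is nonincreasing: d/dt E*_h(t) ≤ 0 for all t. -/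
/-!
Differentiating the energy gives `h² Σ (Ex ∂ₜDx + Ey ∂ₜDy + Hz ∂ₜBz)`. Summation by parts
on the periodic grid moves the differences from the fluxes onto the fields, leaving the
pairing of the vertex flux `H̃z` with the discrete curl of `E` and of the face fluxes
`Ẽx, Ẽy` with the differences of `Hz`. For the Riemann fluxes the central (averaged) parts
cancel, because averaging and differencing commute on the torus, and what remains is
`-Σ ((εc/2) curl² + (μc/2) |∇Hz|²) ≤ 0`.
-/

open Finset

section Periodic

variable {G R : Type*} [AddCommGroup G] [Fintype G] [CommRing R]

theorem sum_comp_add_right (f : G → R) (a : G) : ∑ x, f (x + a) = ∑ x, f x :=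
  Fintype.sum_equiv (Equiv.addRight a) _ _ fun _ => rfl

theorem sum_mul_sub_comp_sub (f g : G → R) (a : G) :
    ∑ x, f x * (g x - g (x - a)) = -∑ x, g x * (f (x + a) - f x) := by
  have hshift : ∑ x, f x * g (x - a) = ∑ x, f (x + a) * g x := by
    rw [← sum_comp_add_right (fun x => f x * g (x - a)) a]
    simp only [add_sub_cancel_right]
  rw [sum_congr rfl fun x _ => mul_sub _ _ _, sum_sub_distrib, hshift,
    sum_congr rfl fun x _ => mul_sub (g x) _ _, sum_sub_distrib]
  simp only [mul_comm (g _)]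
  ring

theorem sum_mul_add_comp_add (d k : G → R) (a : G) :
    ∑ x, d x * (k x + k (x + a)) = ∑ x, (d (x - a) + d x) * k x := by
  have hshift : ∑ x, d x * k (x + a) = ∑ x, d (x - a) * k x := by
    rw [← sum_comp_add_right (fun x => d (x - a) * k x) a]
    simp only [add_sub_cancel_right]
  rw [sum_congr rfl fun x _ => mul_add _ _ _, sum_add_distrib, hshift,
    sum_congr rfl fun x _ => add_mul _ _ _, sum_add_distrib, add_comm]

theorem sum_add_comp_add_mul_sub (p v : G → R) (a : G) :
    ∑ x, (p x + p (x + a)) * (v (x + a) - v x)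
      = -∑ x, (v x + v (x + a)) * (p (x + a) - p x) := by
  rw [eq_neg_iff_add_eq_zero, ← sum_add_distrib]
  have htelescope : ∀ x, (p x + p (x + a)) * (v (x + a) - v x)
      + (v x + v (x + a)) * (p (x + a) - p x) = 2 * (p (x + a) * v (x + a)) - 2 * (p x * v x) :=
    fun x => by ring
  simp only [htelescope, sum_sub_distrib]
  rw [sum_comp_add_right (fun x => 2 * (p x * v x)), sub_self]

theorem sum_sum_cornerSum_mul_sub_add_faceSum_mul_sub_eq_zero (H E : G → G → R) (a b : G) :
    ∑ i, ∑ j, ((H i j + H (i + a) j + H i (j + b) + H (i + a) (j + b)) * (E i (j + b) - E i j)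
      + (E (i - a) j + E i j + E (i - a) (j + b) + E i (j + b)) * (H i (j + b) - H i j)) = 0 := by
  rw [sum_congr rfl fun i _ => sum_add_distrib, sum_add_distrib, add_eq_zero_iff_eq_neg]
  calc ∑ i, ∑ j, (H i j + H (i + a) j + H i (j + b) + H (i + a) (j + b)) * (E i (j + b) - E i j)
      = ∑ i, ∑ j, ((H i j + H (i + a) j) + (H i (j + b) + H (i + a) (j + b)))
          * (E i (j + b) - E i j) :=
        sum_congr rfl fun i _ => sum_congr rfl fun j _ => by ring
    _ = -∑ i, ∑ j, (E i j + E i (j + b))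
          * ((H i (j + b) + H (i + a) (j + b)) - (H i j + H (i + a) j)) := by
        rw [← sum_neg_distrib]
        exact sum_congr rfl fun i _ =>
          sum_add_comp_add_mul_sub (fun j => H i j + H (i + a) j) (E i) b
    _ = -∑ j, ∑ i, (E i j + E i (j + b))
          * ((H i (j + b) - H i j) + (H (i + a) (j + b) - H (i + a) j)) := by
        rw [sum_comm]
        exact congrArg _ (sum_congr rfl fun j _ => sum_congr rfl fun i _ => by ring)
    _ = -∑ j, ∑ i, ((E (i - a) j + E (i - a) (j + b)) + (E i j + E i (j + b)))
          * (H i (j + b) - H i j) :=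
        congrArg _ (sum_congr rfl fun j _ =>
          sum_mul_add_comp_add (fun i => E i j + E i (j + b)) (fun i => H i (j + b) - H i j) a)
    _ = -∑ i, ∑ j, (E (i - a) j + E i j + E (i - a) (j + b) + E i (j + b))
          * (H i (j + b) - H i j) := by
        rw [sum_comm]
        exact congrArg _ (sum_congr rfl fun i _ => sum_congr rfl fun j _ => by ring)

theorem sum_sum_fields_mul_fluxDiff_eq_fluxes_mul_fieldDiff (Ex Ey Hz Ht Etx Ety : G → G → R)
    (a b : G) :
    ∑ i, ∑ j, (Ex i j * (Ht i j - Ht i (j - b)) - Ey i j * (Ht i j - Ht (i - a) j)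
      + Hz i j * (-(Ety i j - Ety (i - a) j) + (Etx i j - Etx i (j - b))))
    = ∑ i, ∑ j, (-(Ht i j * ((Ex i (j + b) - Ex i j) - (Ey (i + a) j - Ey i j)))
      + Ety i j * (Hz (i + a) j - Hz i j) - Etx i j * (Hz i (j + b) - Hz i j)) := by
  have hExHt : ∑ i, ∑ j, Ex i j * (Ht i j - Ht i (j - b))
      = -∑ i, ∑ j, Ht i j * (Ex i (j + b) - Ex i j) := by
    rw [← sum_neg_distrib]
    exact sum_congr rfl fun i _ => sum_mul_sub_comp_sub (Ex i) (Ht i) b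
  have hHzEtx : ∑ i, ∑ j, Hz i j * (Etx i j - Etx i (j - b))
      = -∑ i, ∑ j, Etx i j * (Hz i (j + b) - Hz i j) := by
    rw [← sum_neg_distrib]
    exact sum_congr rfl fun i _ => sum_mul_sub_comp_sub (Hz i) (Etx i) b
  have hEyHt : ∑ i, ∑ j, Ey i j * (Ht i j - Ht (i - a) j)
      = -∑ i, ∑ j, Ht i j * (Ey (i + a) j - Ey i j) := by
    rw [sum_comm]
    conv_rhs => rw [sum_comm]
    rw [← sum_neg_distrib]
    exact sum_congr rfl fun j _ => sum_mul_sub_comp_sub (Ey · j) (Ht · j) a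
  have hHzEty : ∑ i, ∑ j, Hz i j * (Ety i j - Ety (i - a) j)
      = -∑ i, ∑ j, Ety i j * (Hz (i + a) j - Hz i j) := by
    rw [sum_comm]
    conv_rhs => rw [sum_comm]
    rw [← sum_neg_distrib]
    exact sum_congr rfl fun j _ => sum_mul_sub_comp_sub (Hz · j) (Ety · j) a
  simp only [mul_add, mul_neg, mul_sub, sum_add_distrib, sum_sub_distrib,
    sum_neg_distrib] at hExHt hEyHt hHzEtx hHzEty ⊢
  linear_combination hExHt - hEyHt - hHzEty + hHzEtx

end Periodic

theorem sum_sum_power_riemannFlux_eq_neg_dissipation {G R : Type*} [AddCommGroup G]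
    [Fintype G] [Field R] (Ex Ey Hz Ht Etx Ety : G → G → R) (α β : R) (a b : G)
    (hHt : ∀ i j, Ht i j =
      1 / 4 * (Hz i j + Hz (i + a) j + Hz i (j + b) + Hz (i + a) (j + b))
      + α * (Ex i (j + b) - Ex i j) - α * (Ey (i + a) j - Ey i j))
    (hEtx : ∀ i j, Etx i j =
      1 / 4 * (Ex (i - a) j + Ex i j + Ex (i - a) (j + b) + Ex i (j + b))
      + β * (Hz i (j + b) - Hz i j))
    (hEty : ∀ i j, Ety i j =
      1 / 4 * (Ey i (j - b) + Ey i j + Ey (i + a) (j - b) + Ey (i + a) j)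
      - β * (Hz (i + a) j - Hz i j)) :
    ∑ i, ∑ j, (-(Ht i j * ((Ex i (j + b) - Ex i j) - (Ey (i + a) j - Ey i j)))
      + Ety i j * (Hz (i + a) j - Hz i j) - Etx i j * (Hz i (j + b) - Hz i j))
    = -∑ i, ∑ j, (α * ((Ex i (j + b) - Ex i j) - (Ey (i + a) j - Ey i j)) ^ 2
      + β * ((Hz (i + a) j - Hz i j) ^ 2 + (Hz i (j + b) - Hz i j) ^ 2)) := by
  have hcentralEx := sum_sum_cornerSum_mul_sub_add_faceSum_mul_sub_eq_zero Hz Ex a b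
  -- the `y`-direction cancellation is the `x`-direction one on the transposed grid
  have hcentralEy := sum_sum_cornerSum_mul_sub_add_faceSum_mul_sub_eq_zero
    (fun x y => Hz y x) (fun x y => Ey y x) b a
  rw [sum_comm] at hcentralEy
  have hpoint : ∀ i j,
      -(Ht i j * ((Ex i (j + b) - Ex i j) - (Ey (i + a) j - Ey i j)))
        + Ety i j * (Hz (i + a) j - Hz i j) - Etx i j * (Hz i (j + b) - Hz i j)
      = -(α * ((Ex i (j + b) - Ex i j) - (Ey (i + a) j - Ey i j)) ^ 2
          + β * ((Hz (i + a) j - Hz i j) ^ 2 + (Hz i (j + b) - Hz i j) ^ 2))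
        - 1 / 4 * ((Hz i j + Hz (i + a) j + Hz i (j + b) + Hz (i + a) (j + b))
            * (Ex i (j + b) - Ex i j)
          + (Ex (i - a) j + Ex i j + Ex (i - a) (j + b) + Ex i (j + b))
            * (Hz i (j + b) - Hz i j))
        + 1 / 4 * ((Hz i j + Hz i (j + b) + Hz (i + a) j + Hz (i + a) (j + b))
            * (Ey (i + a) j - Ey i j)
          + (Ey i (j - b) + Ey i j + Ey (i + a) (j - b) + Ey (i + a) j)
            * (Hz (i + a) j - Hz i j)) :=
    fun i j => by rw [hHt, hEtx, hEty]; ring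
  rw [sum_congr rfl fun i _ => sum_congr rfl fun j _ => hpoint i j]
  simp only [sum_add_distrib, sum_sub_distrib, sum_neg_distrib, ← mul_sum]
    at hcentralEx hcentralEy ⊢
  linear_combination (-1 / 4 : R) * hcentralEx + 1 / 4 * hcentralEy

theorem hasDerivAt_sum_sum_sq_energy {ι κ : Type*} [Fintype ι] [Fintype κ]
    {Dx Dy Bz : ι → κ → ℝ → ℝ} {Dx' Dy' Bz' : ι → κ → ℝ} {t : ℝ} (eps mu h : ℝ)
    (hdx : ∀ i j, HasDerivAt (Dx i j) (Dx' i j) t) (hdy : ∀ i j, HasDerivAt (Dy i j) (Dy' i j) t)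
    (hbz : ∀ i j, HasDerivAt (Bz i j) (Bz' i j) t) :
    HasDerivAt (fun s => (∑ i, ∑ j, ((Dx i j s) ^ 2 + (Dy i j s) ^ 2) * h ^ 2 / (2 * eps))
        + ∑ i, ∑ j, (Bz i j s) ^ 2 * h ^ 2 / (2 * mu))
      (h ^ 2 * ∑ i, ∑ j,
        (Dx i j t / eps * Dx' i j + Dy i j t / eps * Dy' i j + Bz i j t / mu * Bz' i j)) t := by
  have hD := HasDerivAt.fun_sum (u := univ) fun i _ =>
    HasDerivAt.fun_sum (u := univ) fun j _ =>
      ((((hdx i j).fun_pow 2).add ((hdy i j).fun_pow 2)).mul_const (h ^ 2)).div_const (2 * eps)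
  have hB := HasDerivAt.fun_sum (u := univ) fun i _ =>
    HasDerivAt.fun_sum (u := univ) fun j _ =>
      (((hbz i j).fun_pow 2).mul_const (h ^ 2)).div_const (2 * mu)
  refine (hD.add hB).congr_deriv ?_
  simp only [mul_sum, ← sum_add_distrib]
  refine sum_congr rfl fun i _ => sum_congr rfl fun j _ => ?_
  norm_num
  ring

/-- Indexing convention: `Dx i j = (Dx)_{i+1/2,j}`, `Dy i j = (Dy)_{i,j+1/2}`,
`Bz i j = (Bz)_{i,j}`, `Ht i j = H̃z_{i+1/2,j+1/2}`, `Etx i j = Ẽx_{i,j+1/2}`,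
`Ety i j = Ẽy_{i+1/2,j}`. -/
theorem first_order_scheme_energy_stability_square_cells
    (N : ℕ) [NeZero N]
    (eps mu c h : ℝ) (heps : 0 < eps) (hmu : 0 < mu)
    (hc : c = 1 / Real.sqrt (eps * mu)) (hh : 0 < h)
    (Dx Dy Bz Ex Ey Hz Ht Etx Ety : ZMod N → ZMod N → ℝ → ℝ)
    (hEx : ∀ i j t, Ex i j t = Dx i j t / eps)
    (hEy : ∀ i j t, Ey i j t = Dy i j t / eps)
    (hHz : ∀ i j t, Hz i j t = Bz i j t / mu)
    (hHt : ∀ i j t, Ht i j t =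
      (1/4) * (Hz i j t + Hz (i+1) j t + Hz i (j+1) t + Hz (i+1) (j+1) t)
      + (eps * c / 2) * (Ex i (j+1) t - Ex i j t)
      - (eps * c / 2) * (Ey (i+1) j t - Ey i j t))
    (hEtx : ∀ i j t, Etx i j t =
      (1/4) * (Ex (i-1) j t + Ex i j t + Ex (i-1) (j+1) t + Ex i (j+1) t)
      + (mu * c / 2) * (Hz i (j+1) t - Hz i j t))
    (hEty : ∀ i j t, Ety i j t =
      (1/4) * (Ey i (j-1) t + Ey i j t + Ey (i+1) (j-1) t + Ey (i+1) j t)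
      - (mu * c / 2) * (Hz (i+1) j t - Hz i j t))
    (hdx : ∀ i j t, HasDerivAt (Dx i j) ((Ht i j t - Ht i (j-1) t) / h) t)
    (hdy : ∀ i j t, HasDerivAt (Dy i j) (-((Ht i j t - Ht (i-1) j t) / h)) t)
    (hbz : ∀ i j t, HasDerivAt (Bz i j)
      (-((Ety i j t - Ety (i-1) j t) / h) + (Etx i j t - Etx i (j-1) t) / h) t) :
    ∀ t : ℝ, deriv (fun s =>
      (∑ i : ZMod N, ∑ j : ZMod N,
        ((Dx i j s) ^ 2 + (Dy i j s) ^ 2) * h ^ 2 / (2 * eps))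
      + ∑ i : ZMod N, ∑ j : ZMod N, (Bz i j s) ^ 2 * h ^ 2 / (2 * mu)) t ≤ 0 := by
  intro t
  have hc0 : 0 ≤ c := by rw [hc]; positivity
  rw [(hasDerivAt_sum_sum_sq_energy eps mu h (hdx · · t) (hdy · · t) (hbz · · t)).deriv]
  calc _ = h * ∑ i, ∑ j, (Ex i j t * (Ht i j t - Ht i (j - 1) t)
          - Ey i j t * (Ht i j t - Ht (i - 1) j t)
          + Hz i j t * (-(Ety i j t - Ety (i - 1) j t) + (Etx i j t - Etx i (j - 1) t))) := by
        simp only [mul_sum, hEx, hEy, hHz]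
        refine sum_congr rfl fun i _ => sum_congr rfl fun j _ => ?_
        field_simp
        ring
    _ ≤ 0 := by
        rw [sum_sum_fields_mul_fluxDiff_eq_fluxes_mul_fieldDiff,
          sum_sum_power_riemannFlux_eq_neg_dissipation (Ex · · t) (Ey · · t) (Hz · · t)
            (Ht · · t) (Etx · · t) (Ety · · t) _ _ 1 1 (hHt · · t) (hEtx · · t) (hEty · · t)]
        exact mul_nonpos_of_nonneg_of_nonpos hh.le
          (neg_nonpos.mpr (sum_nonneg fun i _ => sum_nonneg fun j _ => by positivity))
end

section
/- Consider the first-order scheme on an N × N periodic grid (indices in ℤ/N) with constant ε, μ > 0 and cell sizes Δx, Δy > 0, in which all jump (dissipation) terms in the fluxes are dropped, i.e. the central fluxes H̃z_{i+1/2,j+1/2} = (1/4)(Hz_{i,j} + Hz_{i+1,j} + Hz_{i,j+1} + Hz_{i+1,j+1}), Ẽx_{i,j+1/2} = (1/4)(Ex_{i−1/2,j} + Ex_{i+1/2,j} + Ex_{i−1/2,j+1} + Ex_{i+1/2,j+1}), Ẽy_{i+1/2,j} = (1/4)(Ey_{i,j−1/2} + Ey_{i,j+1/2} + Ey_{i+1,j−1/2}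 + Ey_{i+1,j+1/2}) are used. Assume the differentiable grid functions satisfy the semi-discrete scheme. Then the discrete total energy E*_h(t) = Σ_{i,j} [ (Dx)²_{i+1/2,j} + (Dy)²_{i,j+1/2} ] ΔxΔy/(2ε) + Σ_{i,j} (Bz)²_{i,j} ΔxΔy/(2μ) is exactly conserved: d/dt E*_h(t) = 0 for all t. -/
/-!
On a periodic grid the central fluxes make the discrete curl skew-adjoint. Writing
`Ex = Dx / ε`, `Ey = Dy / ε`, `Hz = Bz / μ`, the energy rate is `ΔxΔy` times the pairing
`⟨Ex, ∂t Dx⟩ + ⟨Ey, ∂t Dy⟩ + ⟨Hz, ∂t Bz⟩`, which splits into a `y`-part coupling `Ex` with `Hz`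
and an `x`-part coupling `Ey` with `Hz`; the second is the first on the transposed grid. Each
part vanishes because its summand is a combination of differences `F p - F (p + c)` of
translates, which sum to zero over the finite group `ℤ/N × ℤ/N`.

Indexing: `Dx i j = (Dx)_{i+1/2,j}`, `Dy i j = (Dy)_{i,j+1/2}`, `Bz i j = (Bz)_{i,j}`,
`Ht i j = H̃z_{i+1/2,j+1/2}`, `Etx i j = Ẽx_{i,j+1/2}`, `Ety i j = Ẽy_{i+1/2,j}`.
-/

open Finset

theorem sum_sum_sub_comp_add {G M : Type*} [AddGroup G] [Fintype G] [AddCommGroup M]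
    (F : G → G → M) (a b : G) : ∑ i, ∑ j, (F i j - F (i + a) (j + b)) = 0 := by
  have hj : ∀ i, ∑ j, F (i + a) (j + b) = ∑ j, F (i + a) j := fun i =>
    Equiv.sum_comp (Equiv.addRight b) (F (i + a))
  simp only [sum_sub_distrib, hj, sub_eq_zero]
  exact (Equiv.sum_comp (Equiv.addRight a) fun i => ∑ j, F i j).symm

theorem central_flux_pairing_eq_zero {G K : Type*} [AddGroupWithOne G] [Fintype G] [Field K]
    (e h H E : G → G → K)
    (hH : ∀ i j, H i j = (1/4) * (h i j + h (i+1) j + h i (j+1) + h (i+1) (j+1)))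
    (hE : ∀ i j, E i j = (1/4) * (e (i-1) j + e i j + e (i-1) (j+1) + e i (j+1))) :
    ∑ i, ∑ j, (e i j * (H i j - H i (j-1)) + h i j * (E i j - E i (j-1))) = 0 := by
  have hF := sum_sum_sub_comp_add (fun i j => e i j * h i (j+1) + h i j * e i (j+1)) 0 (-1)
  have hR := sum_sum_sub_comp_add (fun i j => e i j * h (i+1) (j+1)) (-1) (-1)
  have hS := sum_sum_sub_comp_add (fun i j => h i j * e (i-1) (j+1)) 1 (-1)
  simp only [add_zero, ← sub_eq_add_neg, sub_add_cancel, add_sub_cancel_right] at hF hR hS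
  calc _ = ∑ i, ∑ j, (1/4) *
        ((e i j * h i (j+1) + h i j * e i (j+1) - (e i (j-1) * h i j + h i (j-1) * e i j))
          + (e i j * h (i+1) (j+1) - e (i-1) (j-1) * h i j)
          + (h i j * e (i-1) (j+1) - h (i+1) (j-1) * e i j)) := by
        refine sum_congr rfl fun i _ => sum_congr rfl fun j _ => ?_
        simp only [hH, hE, sub_add_cancel]
        ring
    _ = 0 := by simp only [← mul_sum, sum_add_distrib, hF, hR, hS, add_zero, mul_zero]

theorem first_order_central_flux_scheme_energy_conservation_general
    (N : ℕ) [NeZero N]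
    (eps mu Δx Δy : ℝ)
    (Dx Dy Bz Ex Ey Hz Ht Etx Ety : ZMod N → ZMod N → ℝ → ℝ)
    (hEx : ∀ i j t, Ex i j t = Dx i j t / eps)
    (hEy : ∀ i j t, Ey i j t = Dy i j t / eps)
    (hHz : ∀ i j t, Hz i j t = Bz i j t / mu)
    (hHt : ∀ i j t, Ht i j t =
      (1/4) * (Hz i j t + Hz (i+1) j t + Hz i (j+1) t + Hz (i+1) (j+1) t))
    (hEtx : ∀ i j t, Etx i j t =
      (1/4) * (Ex (i-1) j t + Ex i j t + Ex (i-1) (j+1) t + Ex i (j+1) t))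
    (hEty : ∀ i j t, Ety i j t =
      (1/4) * (Ey i (j-1) t + Ey i j t + Ey (i+1) (j-1) t + Ey (i+1) j t))
    (hdx : ∀ i j t, HasDerivAt (Dx i j) ((Ht i j t - Ht i (j-1) t) / Δy) t)
    (hdy : ∀ i j t, HasDerivAt (Dy i j) (-((Ht i j t - Ht (i-1) j t) / Δx)) t)
    (hbz : ∀ i j t, HasDerivAt (Bz i j)
      (-((Ety i j t - Ety (i-1) j t) / Δx) + (Etx i j t - Etx i (j-1) t) / Δy) t) :
    ∀ t : ℝ, deriv (fun s =>
      (∑ i : ZMod N, ∑ j : ZMod N,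
        ((Dx i j s) ^ 2 + (Dy i j s) ^ 2) * (Δx * Δy) / (2 * eps))
      + ∑ i : ZMod N, ∑ j : ZMod N, (Bz i j s) ^ 2 * (Δx * Δy) / (2 * mu)) t = 0 := by
  intro t
  have hy_part := central_flux_pairing_eq_zero (fun i j => Ex i j t) (fun i j => Hz i j t)
    (fun i j => Ht i j t) (fun i j => Etx i j t) (fun i j => hHt i j t) (fun i j => hEtx i j t)
  have hx_part := central_flux_pairing_eq_zero (fun j i => Ey i j t) (fun j i => Hz i j t)
    (fun j i => Ht i j t) (fun j i => Ety i j t) (fun j i => by rw [hHt]; ring)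
    (fun j i => hEty i j t)
  rw [sum_comm] at hx_part
  have hE := (HasDerivAt.fun_sum (u := univ) fun i _ => HasDerivAt.fun_sum (u := univ) fun j _ =>
      ((((hdx i j t).pow 2).add ((hdy i j t).pow 2)).mul_const (Δx * Δy)).div_const (2 * eps)).add
    (HasDerivAt.fun_sum (u := univ) fun i _ => HasDerivAt.fun_sum (u := univ) fun j _ =>
      (((hbz i j t).pow 2).mul_const (Δx * Δy)).div_const (2 * mu))
  refine hE.deriv.trans ?_
  calc _ = Δx * Δy / Δy * ∑ i, ∑ j,
          (Ex i j t * (Ht i j t - Ht i (j-1) t) + Hz i j t * (Etx i j t - Etx i (j-1) t))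
        - Δx * Δy / Δx * ∑ i, ∑ j,
          (Ey i j t * (Ht i j t - Ht (i-1) j t) + Hz i j t * (Ety i j t - Ety (i-1) j t)) := by
        simp only [mul_sum, ← sum_add_distrib, ← sum_sub_distrib]
        refine sum_congr rfl fun i _ => sum_congr rfl fun j _ => ?_
        simp only [hEx, hEy, hHz]
        ring
    _ = 0 := by rw [hy_part, hx_part]; ring

/-- With the purely central fluxes (all jump/dissipation terms dropped),
the first-order semi-discrete scheme on an `N × N` periodic grid exactly conserves the
discrete total energy.

Indexing convention: `Dx i j = (Dx)_{i+1/2,j}`, `Dy i j = (Dy)_{i,j+1/2}`,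
`Bz i j = (Bz)_{i,j}`, `Ht i j = H̃z_{i+1/2,j+1/2}`, `Etx i j = Ẽx_{i,j+1/2}`,
`Ety i j = Ẽy_{i+1/2,j}`. -/
theorem first_order_central_flux_scheme_energy_conservation
    (N : ℕ) [NeZero N]
    (eps mu Δx Δy : ℝ) (heps : 0 < eps) (hmu : 0 < mu)
    (hΔx : 0 < Δx) (hΔy : 0 < Δy)
    (Dx Dy Bz Ex Ey Hz Ht Etx Ety : ZMod N → ZMod N → ℝ → ℝ)
    (hEx : ∀ i j t, Ex i j t = Dx i j t / eps)
    (hEy : ∀ i j t, Ey i j t = Dy i j t / eps)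
    (hHz : ∀ i j t, Hz i j t = Bz i j t / mu)
    (hHt : ∀ i j t, Ht i j t =
      (1/4) * (Hz i j t + Hz (i+1) j t + Hz i (j+1) t + Hz (i+1) (j+1) t))
    (hEtx : ∀ i j t, Etx i j t =
      (1/4) * (Ex (i-1) j t + Ex i j t + Ex (i-1) (j+1) t + Ex i (j+1) t))
    (hEty : ∀ i j t, Ety i j t =
      (1/4) * (Ey i (j-1) t + Ey i j t + Ey (i+1) (j-1) t + Ey (i+1) j t))
    (hdx : ∀ i j t, HasDerivAt (Dx i j) ((Ht i j t - Ht i (j-1) t) / Δy) t)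
    (hdy : ∀ i j t, HasDerivAt (Dy i j) (-((Ht i j t - Ht (i-1) j t) / Δx)) t)
    (hbz : ∀ i j t, HasDerivAt (Bz i j)
      (-((Ety i j t - Ety (i-1) j t) / Δx) + (Etx i j t - Etx i (j-1) t) / Δy) t) :
    ∀ t : ℝ, deriv (fun s =>
      (∑ i : ZMod N, ∑ j : ZMod N,
        ((Dx i j s) ^ 2 + (Dy i j s) ^ 2) * (Δx * Δy) / (2 * eps))
      + ∑ i : ZMod N, ∑ j : ZMod N, (Bz i j s) ^ 2 * (Δx * Δy) / (2 * mu)) t = 0 :=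
  first_order_central_flux_scheme_energy_conservation_general N eps mu Δx Δy Dx Dy Bz Ex Ey Hz Ht
    Etx Ety hEx hEy hHz hHt hEtx hEty hdx hdy hbz
end

section
/- Let M, N ≥ 1, ε, μ > 0, and Δx, Δy > 0. Let p, q : ℤ/M × ℤ/N → ℝ be doubly periodic families of vertical-face values (p_{i,j} = (Dx)_{i−1/2,j}, so cell (i,j) has left value p_{i,j} and right value p_{i+1,j}), and similarly let r, s be horizontal-face values for Dy; let (Bz)_{i,j} be cell values. Define the reconstructed energy E_h = Σ_{i,j} [ (p_{i,j}² + p_{i,j} p_{i+1,j} + p_{i+1,j}²)/3 + (r_{i,j}² + r_{i,j} r_{i,j+1} + r_{i,j+1}²)/3 ] ΔxΔy/(2ε) + Σ_{i,j} (Bz)²_{i,j} ΔxΔy/(2μ), which equals the integral of the first-order piecewise-linear divergence-free reconstruction energy, and the face energy E*_h = Σ_{i,j} [ p_{i,j}² + r_{i,j}² ] ΔxΔy/(2ε) + Σ_{i,j} (Bz)²_{i,j} ΔxΔy/(2μ). Then E_h ≤ E*_h ≤ 3 E_h, so E*_h is an equivalent energy norm. -/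
/-- The face energy `E*_h` and the reconstructed energy `E_h` of the
first-order piecewise-linear divergence-free reconstruction are equivalent:
`E_h ≤ E*_h ≤ 3 E_h`.

Indexing convention: `p i j = (Dx)_{i−1/2,j}` (cell `(i,j)` has left value `p i j` and
right value `p (i+1) j`), `r i j = (Dy)_{i,j−1/2}`, `Bz i j = (Bz)_{i,j}`;
indices are doubly periodic (`ZMod M × ZMod N`). -/
theorem face_energy_equivalent_norm
    (M N : ℕ) [NeZero M] [NeZero N]
    (eps mu Δx Δy : ℝ) (heps : 0 < eps) (hmu : 0 < mu)
    (hΔx : 0 < Δx) (hΔy : 0 < Δy)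
    (p r Bz : ZMod M → ZMod N → ℝ)
    (Eh Estar : ℝ)
    (hEh : Eh = (∑ i : ZMod M, ∑ j : ZMod N,
        (((p i j) ^ 2 + p i j * p (i+1) j + (p (i+1) j) ^ 2) / 3
          + ((r i j) ^ 2 + r i j * r i (j+1) + (r i (j+1)) ^ 2) / 3)
        * (Δx * Δy) / (2 * eps))
      + ∑ i : ZMod M, ∑ j : ZMod N, (Bz i j) ^ 2 * (Δx * Δy) / (2 * mu))
    (hEstar : Estar = (∑ i : ZMod M, ∑ j : ZMod N,
        ((p i j) ^ 2 + (r i j) ^ 2) * (Δx * Δy) / (2 * eps))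
      + ∑ i : ZMod M, ∑ j : ZMod N, (Bz i j) ^ 2 * (Δx * Δy) / (2 * mu)) :
    Eh ≤ Estar ∧ Estar ≤ 3 * Eh := by
  set k : ℝ := Δx * Δy / (2 * eps) with hkdef
  have hk : 0 ≤ k := by positivity
  set Ap : ℝ := ∑ i : ZMod M, ∑ j : ZMod N, p i j ^ 2 with hAp
  set Ar : ℝ := ∑ i : ZMod M, ∑ j : ZMod N, r i j ^ 2 with hAr
  set Cp : ℝ := ∑ i : ZMod M, ∑ j : ZMod N, p i j * p (i+1) j with hCp
  set Cr : ℝ := ∑ i : ZMod M, ∑ j : ZMod N, r i j * r i (j+1) with hCr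
  set B : ℝ := ∑ i : ZMod M, ∑ j : ZMod N, (Bz i j) ^ 2 * (Δx * Δy) / (2 * mu) with hB
  have e1 : ∑ i : ZMod M, ∑ j : ZMod N, p (i+1) j ^ 2 = Ap :=
    Fintype.sum_equiv (Equiv.addRight (1 : ZMod M)) _ _ (fun i => rfl)
  have e2 : ∑ i : ZMod M, ∑ j : ZMod N, r i (j+1) ^ 2 = Ar :=
    Finset.sum_congr rfl fun i _ =>
      Fintype.sum_equiv (Equiv.addRight (1 : ZMod N)) _ _ (fun j => rfl)
  have hp1 : Cp ≤ Ap := by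
    have h2 : 2 * Cp ≤ Ap + (∑ i : ZMod M, ∑ j : ZMod N, p (i+1) j ^ 2) := by
      rw [hCp, hAp, Finset.mul_sum, ← Finset.sum_add_distrib]
      refine Finset.sum_le_sum fun i _ => ?_
      rw [Finset.mul_sum, ← Finset.sum_add_distrib]
      refine Finset.sum_le_sum fun j _ => ?_
      nlinarith [sq_nonneg (p i j - p (i+1) j)]
    rw [e1] at h2; linarith
  have hp2 : -Ap ≤ Cp := by
    have h2 : -(Ap + (∑ i : ZMod M, ∑ j : ZMod N, p (i+1) j ^ 2)) ≤ 2 * Cp := by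
      rw [hCp, hAp, Finset.mul_sum, ← Finset.sum_add_distrib, ← Finset.sum_neg_distrib]
      refine Finset.sum_le_sum fun i _ => ?_
      rw [Finset.mul_sum, ← Finset.sum_add_distrib, ← Finset.sum_neg_distrib]
      refine Finset.sum_le_sum fun j _ => ?_
      nlinarith [sq_nonneg (p i j + p (i+1) j)]
    rw [e1] at h2; linarith
  have hr1 : Cr ≤ Ar := by
    have h2 : 2 * Cr ≤ Ar + (∑ i : ZMod M, ∑ j : ZMod N, r i (j+1) ^ 2) := by
      rw [hCr, hAr, Finset.mul_sum, ← Finset.sum_add_distrib]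
      refine Finset.sum_le_sum fun i _ => ?_
      rw [Finset.mul_sum, ← Finset.sum_add_distrib]
      refine Finset.sum_le_sum fun j _ => ?_
      nlinarith [sq_nonneg (r i j - r i (j+1))]
    rw [e2] at h2; linarith
  have hr2 : -Ar ≤ Cr := by
    have h2 : -(Ar + (∑ i : ZMod M, ∑ j : ZMod N, r i (j+1) ^ 2)) ≤ 2 * Cr := by
      rw [hCr, hAr, Finset.mul_sum, ← Finset.sum_add_distrib, ← Finset.sum_neg_distrib]
      refine Finset.sum_le_sum fun i _ => ?_
      rw [Finset.mul_sum, ← Finset.sum_add_distrib, ← Finset.sum_neg_distrib]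
      refine Finset.sum_le_sum fun j _ => ?_
      nlinarith [sq_nonneg (r i j + r i (j+1))]
    rw [e2] at h2; linarith
  have hBnn : 0 ≤ B := by
    rw [hB]
    refine Finset.sum_nonneg fun i _ => Finset.sum_nonneg fun j _ => by positivity
  have expand : (∑ i : ZMod M, ∑ j : ZMod N,
      (p i j ^ 2 + p i j * p (i+1) j + p (i+1) j ^ 2
        + (r i j ^ 2 + r i j * r i (j+1) + r i (j+1) ^ 2)))
      = 2 * Ap + Cp + 2 * Ar + Cr := by
    simp only [Finset.sum_add_distrib]
    rw [e1, e2, ← hAp, ← hAr, ← hCp, ← hCr]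
    ring
  have hEh' : Eh = (2 * Ap + Cp + 2 * Ar + Cr) * (k / 3) + B := by
    rw [hEh, ← expand]
    congr 1
    rw [Finset.sum_mul]
    refine Finset.sum_congr rfl fun i _ => ?_
    rw [Finset.sum_mul]
    refine Finset.sum_congr rfl fun j _ => ?_
    rw [hkdef]; ring
  have hEstar' : Estar = (Ap + Ar) * k + B := by
    rw [hEstar]
    congr 1
    rw [hAp, hAr, ← Finset.sum_add_distrib, Finset.sum_mul]
    refine Finset.sum_congr rfl fun i _ => ?_
    rw [← Finset.sum_add_distrib, Finset.sum_mul]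
    refine Finset.sum_congr rfl fun j _ => ?_
    rw [hkdef]; ring
  clear_value k Ap Ar Cp Cr B
  constructor
  · rw [hEh', hEstar']
    have h1 : (2 * Ap + Cp + 2 * Ar + Cr) * (k / 3) ≤ (3 * (Ap + Ar)) * (k / 3) :=
      mul_le_mul_of_nonneg_right (by linarith) (by linarith)
    have h2 : (3 * (Ap + Ar)) * (k / 3) = (Ap + Ar) * k := by ring
    linarith
  · rw [hEh', hEstar']
    have h1 : (Ap + Ar) * k ≤ 3 * ((2 * Ap + Cp + 2 * Ar + Cr) * (k / 3)) := by
      have h2 : 3 * ((2 * Ap + Cp + 2 * Ar + Cr) * (k / 3)) = (2 * Ap + Cp + 2 * Ar + Cr) * k := by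
        ring
      rw [h2]
      exact mul_le_mul_of_nonneg_right (by linarith) hk
    linarith
end

section
/- Let ε, μ > 0, c = 1/√(εμ), and let n = (n_x, n_y) be a unit vector. Let U^L = (Dx^L, Dy^L, Bz^L) and U^R = (Dx^R, Dy^R, Bz^R) be two states with continuous normal displacement: Dx^L n_x + Dy^L n_y = Dx^R n_x + Dy^R n_y. Suppose intermediate states U* and U** satisfy the Rankine–Hugoniot jump conditions for the 2-D TE Maxwell flux F_n across the waves of speeds −c, 0, +c: F_n(U*) − F_n(U^L) = −c (U* − U^L), F_n(U**) − F_n(U*) = 0 together with Bz** = Bz*, and F_n(U**) − F_n(U^R) = +c (U** − U^R). Then U* = U**, the normal component is continuous throughout (Dx* n_x + Dy* n_y = Dx^L n_x + Dy^L n_y), and the resolved tangential/magnetic components are given by Dy* n_x − Dx* n_y = (1/2)[(Dy^L n_x − Dx^L n_y) + (Dy^R n_x − Dx^R n_y)] − (εc/2)(Bz^R − Bz^L) and Bz* = (1/2)(Bz^L + Bz^R) − (μc/2)[(Dy^R n_x − Dx^R n_y) − (Dy^L n_x − Dx^L n_y)]. -/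
/-- Solution of the 1-D Riemann problem for the 2-D TE Maxwell system:
given states `U^L, U^R` with continuous normal displacement and intermediate states
`U*, U**` satisfying the Rankine–Hugoniot jump conditions across the waves of speeds
`−c, 0, +c`, we have `U* = U**`, the normal component is continuous throughout, and the
resolved tangential/magnetic components are as stated.

A state is a triple `(Dx, Dy, Bz) : ℝ × ℝ × ℝ`. -/
theorem te_maxwell_riemann_problem_solution
    (eps mu c nx ny : ℝ) (heps : 0 < eps) (hmu : 0 < mu)
    (hc : c = 1 / Real.sqrt (eps * mu)) (hn : nx ^ 2 + ny ^ 2 = 1)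
    (Fn : ℝ × ℝ × ℝ → ℝ × ℝ × ℝ)
    (hFn : ∀ U : ℝ × ℝ × ℝ,
      Fn U = (-(ny / mu) * U.2.2, (nx / mu) * U.2.2, (U.2.1 * nx - U.1 * ny) / eps))
    (UL UR Us Uss : ℝ × ℝ × ℝ)
    (hnormal : UL.1 * nx + UL.2.1 * ny = UR.1 * nx + UR.2.1 * ny)
    (hminus : Fn Us - Fn UL = (-c) • (Us - UL))
    (hzero : Fn Uss - Fn Us = 0) (hzeroB : Uss.2.2 = Us.2.2)
    (hplus : Fn Uss - Fn UR = c • (Uss - UR)) :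
    Us = Uss ∧
    Us.1 * nx + Us.2.1 * ny = UL.1 * nx + UL.2.1 * ny ∧
    Us.2.1 * nx - Us.1 * ny
      = (1/2) * ((UL.2.1 * nx - UL.1 * ny) + (UR.2.1 * nx - UR.1 * ny))
        - (eps * c / 2) * (UR.2.2 - UL.2.2) ∧
    Us.2.2 = (1/2) * (UL.2.2 + UR.2.2)
        - (mu * c / 2) * ((UR.2.1 * nx - UR.1 * ny) - (UL.2.1 * nx - UL.1 * ny)) := by
  have hem : (0:ℝ) < eps * mu := mul_pos heps hmu
  have hs : Real.sqrt (eps * mu) > 0 := Real.sqrt_pos.2 hem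
  have hcpos : 0 < c := by rw [hc]; positivity
  have hcne : c ≠ 0 := ne_of_gt hcpos
  have hc2 : eps * mu * c ^ 2 = 1 := by
    have h := Real.sq_sqrt hem.le
    rw [hc, div_pow, one_pow, h]
    field_simp
  have hepsne : eps ≠ 0 := ne_of_gt heps
  have hmune : mu ≠ 0 := ne_of_gt hmu
  obtain ⟨L1, L2, L3⟩ := UL
  obtain ⟨R1, R2, R3⟩ := UR
  obtain ⟨s1, s2, s3⟩ := Us
  obtain ⟨t1, t2, t3⟩ := Uss
  simp only [hFn, Prod.mk_sub_mk, Prod.smul_mk, smul_eq_mul, Prod.mk.injEq,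
    Prod.mk_eq_zero] at hminus hzero hplus hnormal hzeroB ⊢
  obtain ⟨e1, e2, e3⟩ := hminus
  obtain ⟨g1, g2, g3⟩ := hzero
  obtain ⟨f1, f2, f3⟩ := hplus
  -- clear denominators
  have e3' : (s2 * nx - s1 * ny) - (L2 * nx - L1 * ny) = -(eps * c) * (s3 - L3) := by
    linear_combination (norm := (field_simp; try ring)) eps * e3
  have f3' : (t2 * nx - t1 * ny) - (R2 * nx - R1 * ny) = eps * c * (t3 - R3) := by
    linear_combination (norm := (field_simp; try ring)) eps * f3
  have g3' : t2 * nx - t1 * ny = s2 * nx - s1 * ny := by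
    linear_combination (norm := (field_simp; try ring)) eps * g3
  -- normal components
  have hsn : s1 * nx + s2 * ny = L1 * nx + L2 * ny := by
    have h : c * ((s1 * nx + s2 * ny) - (L1 * nx + L2 * ny)) = 0 := by
      linear_combination (norm := (field_simp; try ring)) nx * e1 + ny * e2
    rcases mul_eq_zero.1 h with h | h
    · exact absurd h hcne
    · linarith
  have htn : t1 * nx + t2 * ny = R1 * nx + R2 * ny := by
    have h : c * ((t1 * nx + t2 * ny) - (R1 * nx + R2 * ny)) = 0 := by
      linear_combination (norm := (field_simp; try ring)) (-nx) * f1 + (-ny) * f2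
    rcases mul_eq_zero.1 h with h | h
    · exact absurd h hcne
    · linarith
  have f3'' : (s2 * nx - s1 * ny) - (R2 * nx - R1 * ny) = eps * c * (s3 - R3) := by
    rw [← g3', ← hzeroB]; exact f3'
  -- tangential component
  have htau : s2 * nx - s1 * ny
      = 1 / 2 * (L2 * nx - L1 * ny + (R2 * nx - R1 * ny)) - eps * c / 2 * (R3 - L3) := by
    linarith [e3', f3'']
  -- Bz component
  have hB : s3 = 1 / 2 * (L3 + R3) - mu * c / 2 * (R2 * nx - R1 * ny - (L2 * nx - L1 * ny)) := by
    have key : eps * c * (2 * s3 - L3 - R3) = -(R2 * nx - R1 * ny - (L2 * nx - L1 * ny)) := by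
      linarith [e3', f3'']
    linear_combination (mu * c / 2) * key + ((L3 + R3) / 2 - s3) * hc2
  have hn2 : t1 * nx + t2 * ny = s1 * nx + s2 * ny := by rw [htn, ← hnormal, hsn]
  have h1 : s1 = t1 := by
    linear_combination (-nx) * hn2 + ny * g3' + (t1 - s1) * hn
  have h2 : s2 = t2 := by
    linear_combination (-ny) * hn2 + (-nx) * g3' + (t2 - s2) * hn
  exact ⟨⟨h1, h2, hzeroB.symm⟩, hsn, htau, hB⟩
end
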